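/- arXiv:1203.2356 — 6 statements merged into one kernel-verified Lean document; each statement's English description precedes it below -/
import Mathlib

section
/- Let K be an algebraically closed field equipped with a nontrivial additive valuation val : K* → ℝ whose residue field has characteristic different from 2 and 3, and let ι ∈ K* with val(ι) < 0. Consider the degree 12 polynomial P(b) = 432ι·b¹² − 864ι·b¹¹ + 648ι·b¹⁰ − (208ι + 110592)·b⁹ + (15ι + 165888)·b⁸ + (6ι − 82944)·b⁷ − (ι − 6912)·b⁶ + 6912·b⁵ − 1728·b⁴ − 144·b³ + 72·b² − 1 over K. Then P has twelve roots in K counted with multiplicity; exactly six of them (counted with multiplicity) have valuation 0, and exactly six of them (counted with multiplicity) have valuation −val(ι)/6. -/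
open Polynomial
open scoped Classical


open Polynomial
open scoped Classical

section auxv
variable {K : Type*} [Field K] {v : K → ℝ}

lemma aux_v_one (hmul : ∀ x y : K, x ≠ 0 → y ≠ 0 → v (x * y) = v x + v y) :
    v (1 : K) = 0 := by
  have h := hmul 1 1 one_ne_zero one_ne_zero
  rw [one_mul] at h; linarith

lemma aux_v_neg_one (hmul : ∀ x y : K, x ≠ 0 → y ≠ 0 → v (x * y) = v x + v y) :
    v (-1 : K) = 0 := by
  have h := hmul (-1) (-1) (by norm_num) (by norm_num)
  rw [show ((-1 : K) * (-1)) = 1 by ring] at h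
  have h1 := aux_v_one hmul
  linarith

lemma aux_v_neg (hmul : ∀ x y : K, x ≠ 0 → y ≠ 0 → v (x * y) = v x + v y)
    (x : K) (hx : x ≠ 0) : v (-x) = v x := by
  have h := hmul (-1) x (by norm_num) hx
  rw [neg_one_mul] at h
  rw [h, aux_v_neg_one hmul]; ring

lemma aux_v_pow (hmul : ∀ x y : K, x ≠ 0 → y ≠ 0 → v (x * y) = v x + v y)
    {x : K} (hx : x ≠ 0) (n : ℕ) : v (x ^ n) = n * v x := by
  induction n with
  | zero => simp [aux_v_one hmul]
  | succ n ih =>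
      rw [pow_succ, hmul _ _ (pow_ne_zero n hx) hx, ih]
      push_cast; ring

lemma aux_v_add_lt (hmul : ∀ x y : K, x ≠ 0 → y ≠ 0 → v (x * y) = v x + v y)
    (hadd : ∀ x y : K, x ≠ 0 → y ≠ 0 → x + y ≠ 0 → min (v x) (v y) ≤ v (x + y))
    {x y : K} (hx : x ≠ 0) (hy : y ≠ 0) (hlt : v x < v y) : v (x + y) = v x := by
  have hxy : x + y ≠ 0 := by
    intro h
    have : y = -x := by linear_combination h
    rw [this, aux_v_neg hmul x hx] at hlt
    linarith
  have h1 := hadd x y hx hy hxy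
  have h2 := hadd (x + y) (-y) hxy (neg_ne_zero.mpr hy) (by simpa using hx)
  rw [add_neg_cancel_right, aux_v_neg hmul y hy] at h2
  rcases min_cases (v x) (v y) with ⟨he, _⟩ | ⟨_, hc⟩
  · rw [he] at h1
    rcases min_cases (v (x + y)) (v y) with ⟨he2, _⟩ | ⟨he2, hc2⟩
    · rw [he2] at h2; linarith
    · linarith
  · linarith

lemma aux_v_nat (hmul : ∀ x y : K, x ≠ 0 → y ≠ 0 → v (x * y) = v x + v y)
    (hadd : ∀ x y : K, x ≠ 0 → y ≠ 0 → x + y ≠ 0 → min (v x) (v y) ≤ v (x + y)) :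
    ∀ n : ℕ, (n : K) ≠ 0 → 0 ≤ v n := by
  intro n
  induction n with
  | zero => intro h; simp at h
  | succ n ih =>
      intro h
      by_cases h0 : (n : K) = 0
      · push_cast; rw [h0, zero_add, aux_v_one hmul]
      · have h2 := hadd (n : K) 1 h0 one_ne_zero (by push_cast at h ⊢; exact h)
        have h3 := ih h0
        have h4 := aux_v_one hmul
        push_cast
        rcases min_cases (v (n:K)) (v (1:K)) with ⟨he, _⟩ | ⟨he, _⟩ <;>
          rw [he] at h2 <;> push_cast at h2 <;> linarith

lemma aux_vgt_add
    (hadd : ∀ x y : K, x ≠ 0 → y ≠ 0 → x + y ≠ 0 → min (v x) (v y) ≤ v (x + y))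
    {c : ℝ} {x y : K} (hx : x = 0 ∨ c < v x) (hy : y = 0 ∨ c < v y) :
    x + y = 0 ∨ c < v (x + y) := by
  rcases hx with hx | hx
  · simpa [hx] using hy
  rcases hy with hy | hy
  · simpa [hy] using Or.inr hx
  by_cases hx0 : x = 0
  · simpa [hx0] using Or.inr hy
  by_cases hy0 : y = 0
  · simpa [hy0] using Or.inr hx
  by_cases hxy : x + y = 0
  · exact Or.inl hxy
  · right
    have h := hadd x y hx0 hy0 hxy
    rcases min_cases (v x) (v y) with ⟨he, _⟩ | ⟨he, _⟩ <;> rw [he] at h <;> linarith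


lemma aux_v_inv (hmul : ∀ x y : K, x ≠ 0 → y ≠ 0 → v (x * y) = v x + v y)
    {x : K} (hx : x ≠ 0) : v x⁻¹ = -v x := by
  have h := hmul x x⁻¹ hx (inv_ne_zero hx)
  rw [mul_inv_cancel₀ hx, aux_v_one hmul] at h
  linarith

lemma aux_term (hmul : ∀ x y : K, x ≠ 0 → y ≠ 0 → v (x * y) = v x + v y)
    {r a : K} (hr : r ≠ 0) {n : ℕ} {c w : ℝ}
    (ha : a ≠ 0 → w ≤ v a) (h : c < w + (n : ℝ) * v r) :
    a * r ^ n = 0 ∨ c < v (a * r ^ n) := by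
  by_cases h0 : a = 0
  · left; simp [h0]
  · right
    rw [hmul a (r ^ n) h0 (pow_ne_zero n hr), aux_v_pow hmul hr n]
    have := ha h0
    linarith

lemma aux_coef (hmul : ∀ x y : K, x ≠ 0 → y ≠ 0 → v (x * y) = v x + v y)
    (hadd : ∀ x y : K, x ≠ 0 → y ≠ 0 → x + y ≠ 0 → min (v x) (v y) ≤ v (x + y))
    {ι : K} (hι0 : ι ≠ 0) (hι : v ι < 0) (c d : K)
    (hc : c ≠ 0 → 0 ≤ v c) (hd : d ≠ 0 → 0 ≤ v d) :
    c * ι + d ≠ 0 → v ι ≤ v (c * ι + d) := by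
  intro hne
  by_cases hc0 : c = 0
  · rw [hc0, zero_mul, zero_add] at hne ⊢
    have := hd hne; linarith
  have h1 : v (c * ι) = v c + v ι := hmul c ι hc0 hι0
  have hc1 := hc hc0
  by_cases hd0 : d = 0
  · rw [hd0, add_zero]; rw [h1]; linarith
  · have h2 := hadd (c * ι) d (mul_ne_zero hc0 hι0) hd0 hne
    have hd1 := hd hd0
    rcases min_cases (v (c * ι)) (v d) with ⟨he, _⟩ | ⟨he, _⟩ <;> rw [he] at h2 <;> linarith

lemma aux_contra (hmul : ∀ x y : K, x ≠ 0 → y ≠ 0 → v (x * y) = v x + v y)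
    {c : ℝ} {D S : K} (hD : D ≠ 0) (hvD : v D = c) (hDS : D + S = 0)
    (hS : S = 0 ∨ c < v S) : False := by
  have hSD : S = -D := by linear_combination hDS
  rcases hS with h | h
  · exact hD (by rwa [h, add_zero] at hDS)
  · rw [hSD, aux_v_neg hmul D hD, hvD] at h
    linarith

lemma aux_prod (hmul : ∀ x y : K, x ≠ 0 → y ≠ 0 → v (x * y) = v x + v y)
    (m : Multiset K) (hm : ∀ x ∈ m, x ≠ 0) : v m.prod = (m.map v).sum := by
  induction m using Multiset.induction_on with
  | empty => simp [aux_v_one hmul]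
  | cons a m ih =>
      have ha : a ≠ 0 := hm a (Multiset.mem_cons_self a m)
      have hm' : ∀ x ∈ m, x ≠ 0 := fun x hx => hm x (Multiset.mem_cons_of_mem hx)
      have hp : m.prod ≠ 0 := Multiset.prod_ne_zero (fun h => hm' 0 h rfl)
      rw [Multiset.prod_cons, hmul a m.prod ha hp, ih hm', Multiset.map_cons, Multiset.sum_cons]

lemma aux_v23 (hmul : ∀ x y : K, x ≠ 0 → y ≠ 0 → v (x * y) = v x + v y)
    (hres2 : (2 : K) ≠ 0 ∧ v 2 = 0) (hres3 : (3 : K) ≠ 0 ∧ v 3 = 0) (a b : ℕ) :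
    (2 : K) ^ a * 3 ^ b ≠ 0 ∧ v ((2 : K) ^ a * 3 ^ b) = 0 := by
  have hne : (2 : K) ^ a * 3 ^ b ≠ 0 :=
    mul_ne_zero (pow_ne_zero a hres2.1) (pow_ne_zero b hres3.1)
  refine ⟨hne, ?_⟩
  rw [hmul _ _ (pow_ne_zero a hres2.1) (pow_ne_zero b hres3.1),
    aux_v_pow hmul hres2.1, aux_v_pow hmul hres3.1, hres2.2, hres3.2]
  ring

end auxv

lemma aux_main {K : Type*} [Field K] {v : K → ℝ}
    (hmul : ∀ x y : K, x ≠ 0 → y ≠ 0 → v (x * y) = v x + v y)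
    (hadd : ∀ x y : K, x ≠ 0 → y ≠ 0 → x + y ≠ 0 → min (v x) (v y) ≤ v (x + y))
    (hres2 : (2 : K) ≠ 0 ∧ v 2 = 0) (hres3 : (3 : K) ≠ 0 ∧ v 3 = 0)
    {ι : K} (hι0 : ι ≠ 0) (hι : v ι < 0) {r : K} (hr : r ≠ 0)
    (hE : 432*ι*r^12 - 864*ι*r^11 + 648*ι*r^10 - (208*ι + 110592)*r^9
      + (15*ι + 165888)*r^8 + (6*ι - 82944)*r^7 - (ι - 6912)*r^6 + 6912*r^5
      - 1728*r^4 - 144*r^3 + 72*r^2 - 1 = 0) :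
    v r = 0 ∨ v r = -v ι / 6 := by
  have h432 := aux_v23 hmul hres2 hres3 4 3
  rw [show ((2:K)^4*3^3 : K) = 432 by norm_num] at h432
  have h864 := aux_v23 hmul hres2 hres3 5 3
  rw [show ((2:K)^5*3^3 : K) = 864 by norm_num] at h864
  have h648 := aux_v23 hmul hres2 hres3 3 4
  rw [show ((2:K)^3*3^4 : K) = 648 by norm_num] at h648
  have h110592 := aux_v23 hmul hres2 hres3 12 3
  rw [show ((2:K)^12*3^3 : K) = 110592 by norm_num] at h110592
  have h165888 := aux_v23 hmul hres2 hres3 11 4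
  rw [show ((2:K)^11*3^4 : K) = 165888 by norm_num] at h165888
  have h82944 := aux_v23 hmul hres2 hres3 10 4
  rw [show ((2:K)^10*3^4 : K) = 82944 by norm_num] at h82944
  have h6912 := aux_v23 hmul hres2 hres3 8 3
  rw [show ((2:K)^8*3^3 : K) = 6912 by norm_num] at h6912
  have h1728 := aux_v23 hmul hres2 hres3 6 3
  rw [show ((2:K)^6*3^3 : K) = 1728 by norm_num] at h1728
  have h144 := aux_v23 hmul hres2 hres3 4 2
  rw [show ((2:K)^4*3^2 : K) = 144 by norm_num] at h144
  have h72 := aux_v23 hmul hres2 hres3 3 2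
  rw [show ((2:K)^3*3^2 : K) = 72 by norm_num] at h72
  -- exact coefficient valuations for the pure-iota coefficients
  have hn12 : (432*ι : K) ≠ 0 := mul_ne_zero h432.1 hι0
  have hv12 : v (432*ι) = v ι := by rw [hmul _ _ h432.1 hι0, h432.2]; ring
  have hn11 : (-(864*ι) : K) ≠ 0 := neg_ne_zero.mpr (mul_ne_zero h864.1 hι0)
  have hv11 : v (-(864*ι)) = v ι := by
    rw [aux_v_neg hmul _ (mul_ne_zero h864.1 hι0), hmul _ _ h864.1 hι0, h864.2]; ring
  have hn10 : (648*ι : K) ≠ 0 := mul_ne_zero h648.1 hι0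
  have hv10 : v (648*ι) = v ι := by rw [hmul _ _ h648.1 hι0, h648.2]; ring
  -- coefficient 6 : -(ι - 6912)
  have hn6 : (-(ι - 6912) : K) ≠ 0 := by
    intro h
    have h' : ι = (6912 : K) := by linear_combination -h
    rw [h', h6912.2] at hι; linarith
  have hv6 : v (-(ι - 6912)) = v ι := by
    have hs : (ι - 6912 : K) ≠ 0 := fun h => hn6 (by rw [h, neg_zero])
    rw [aux_v_neg hmul _ hs, show (ι - 6912 : K) = ι + (-6912) by ring,
      aux_v_add_lt hmul hadd hι0 (neg_ne_zero.mpr h6912.1)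
        (by rw [aux_v_neg hmul _ h6912.1, h6912.2]; linarith)]
  -- lower bounds for the mixed coefficients
  have hnatbd208 : (208:K) ≠ 0 → 0 ≤ v (208:K) := fun h => by
    have := aux_v_nat hmul hadd 208 (by exact_mod_cast h)
    exact_mod_cast this
  have hnatbd15 : (15:K) ≠ 0 → 0 ≤ v (15:K) := fun h => by
    have := aux_v_nat hmul hadd 15 (by exact_mod_cast h)
    exact_mod_cast this
  have hnatbd6 : (6:K) ≠ 0 → 0 ≤ v (6:K) := fun h => by
    have := aux_v_nat hmul hadd 6 (by exact_mod_cast h)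
    exact_mod_cast this
  have hq9 : (-(208*ι + 110592) : K) ≠ 0 → v ι ≤ v (-(208*ι + 110592)) := by
    intro h
    have h' : (208*ι + 110592 : K) ≠ 0 := fun h0 => h (by rw [h0, neg_zero])
    rw [aux_v_neg hmul _ h']
    exact aux_coef hmul hadd hι0 hι 208 110592 hnatbd208
      (fun _ => le_of_eq h110592.2.symm) h'
  have hq8 : (15*ι + 165888 : K) ≠ 0 → v ι ≤ v (15*ι + 165888) :=
    aux_coef hmul hadd hι0 hι 15 165888 hnatbd15 (fun _ => le_of_eq h165888.2.symm)
  have hq7 : (6*ι - 82944 : K) ≠ 0 → v ι ≤ v (6*ι - 82944) := by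
    rw [sub_eq_add_neg]
    exact aux_coef hmul hadd hι0 hι 6 (-82944) hnatbd6
      (fun _ => le_of_eq (by rw [aux_v_neg hmul _ h82944.1, h82944.2]))
  have hvm1 : v (-1 : K) = 0 := aux_v_neg_one hmul
  rcases lt_trichotomy (v r) 0 with hneg | hzero | hpos
  · -- case v r < 0 : impossible
    exfalso
    have hT11 : (-(864*ι))*r^11 = 0 ∨ v ι + 12 * v r < v ((-(864*ι))*r^11) :=
      aux_term hmul hr (fun _ => le_of_eq hv11.symm) (by push_cast; linarith)
    have hT10 : (648*ι)*r^10 = 0 ∨ v ι + 12 * v r < v ((648*ι)*r^10) :=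
      aux_term hmul hr (fun _ => le_of_eq hv10.symm) (by push_cast; linarith)
    have hT9 : (-(208*ι + 110592))*r^9 = 0 ∨ v ι + 12 * v r < v ((-(208*ι + 110592))*r^9) :=
      aux_term hmul hr hq9 (by push_cast; linarith)
    have hT8 : (15*ι + 165888)*r^8 = 0 ∨ v ι + 12 * v r < v ((15*ι + 165888)*r^8) :=
      aux_term hmul hr hq8 (by push_cast; linarith)
    have hT7 : (6*ι - 82944)*r^7 = 0 ∨ v ι + 12 * v r < v ((6*ι - 82944)*r^7) :=
      aux_term hmul hr hq7 (by push_cast; linarith)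
    have hT6 : (-(ι - 6912))*r^6 = 0 ∨ v ι + 12 * v r < v ((-(ι - 6912))*r^6) :=
      aux_term hmul hr (fun _ => le_of_eq hv6.symm) (by push_cast; linarith)
    have hT5 : (6912:K)*r^5 = 0 ∨ v ι + 12 * v r < v ((6912:K)*r^5) :=
      aux_term hmul hr (fun _ => le_of_eq h6912.2.symm) (by push_cast; linarith)
    have hT4 : (-1728:K)*r^4 = 0 ∨ v ι + 12 * v r < v ((-1728:K)*r^4) :=
      aux_term hmul hr (fun _ => le_of_eq
        (by rw [show (-1728:K) = -(1728:K) by ring, aux_v_neg hmul _ h1728.1, h1728.2]))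
        (by push_cast; linarith)
    have hT3 : (-144:K)*r^3 = 0 ∨ v ι + 12 * v r < v ((-144:K)*r^3) :=
      aux_term hmul hr (fun _ => le_of_eq
        (by rw [show (-144:K) = -(144:K) by ring, aux_v_neg hmul _ h144.1, h144.2]))
        (by push_cast; linarith)
    have hT2 : (72:K)*r^2 = 0 ∨ v ι + 12 * v r < v ((72:K)*r^2) :=
      aux_term hmul hr (fun _ => le_of_eq h72.2.symm) (by push_cast; linarith)
    have hT0 : (-1:K) = 0 ∨ v ι + 12 * v r < v (-1:K) := Or.inr (by rw [hvm1]; linarith)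
    have hS := aux_vgt_add hadd hT11 (aux_vgt_add hadd hT10 (aux_vgt_add hadd hT9
      (aux_vgt_add hadd hT8 (aux_vgt_add hadd hT7 (aux_vgt_add hadd hT6
      (aux_vgt_add hadd hT5 (aux_vgt_add hadd hT4 (aux_vgt_add hadd hT3
      (aux_vgt_add hadd hT2 hT0)))))))))
    have hD : (432*ι)*r^12 ≠ 0 := mul_ne_zero hn12 (pow_ne_zero 12 hr)
    have hvD : v ((432*ι)*r^12) = v ι + 12 * v r := by
      rw [hmul _ _ hn12 (pow_ne_zero 12 hr), aux_v_pow hmul hr, hv12]; push_cast; ring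
    exact aux_contra hmul hD hvD (by linear_combination hE) hS
  · exact Or.inl hzero
  rcases lt_trichotomy (v ι + 6 * v r) 0 with hmid | heq | hbig
  · -- case 0 < v r and v ι + 6 v r < 0 : impossible
    exfalso
    have hT12 : (432*ι)*r^12 = 0 ∨ v ι + 6 * v r < v ((432*ι)*r^12) :=
      aux_term hmul hr (fun _ => le_of_eq hv12.symm) (by push_cast; linarith)
    have hT11 : (-(864*ι))*r^11 = 0 ∨ v ι + 6 * v r < v ((-(864*ι))*r^11) :=
      aux_term hmul hr (fun _ => le_of_eq hv11.symm) (by push_cast; linarith)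
    have hT10 : (648*ι)*r^10 = 0 ∨ v ι + 6 * v r < v ((648*ι)*r^10) :=
      aux_term hmul hr (fun _ => le_of_eq hv10.symm) (by push_cast; linarith)
    have hT9 : (-(208*ι + 110592))*r^9 = 0 ∨ v ι + 6 * v r < v ((-(208*ι + 110592))*r^9) :=
      aux_term hmul hr hq9 (by push_cast; linarith)
    have hT8 : (15*ι + 165888)*r^8 = 0 ∨ v ι + 6 * v r < v ((15*ι + 165888)*r^8) :=
      aux_term hmul hr hq8 (by push_cast; linarith)
    have hT7 : (6*ι - 82944)*r^7 = 0 ∨ v ι + 6 * v r < v ((6*ι - 82944)*r^7) :=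
      aux_term hmul hr hq7 (by push_cast; linarith)
    have hT5 : (6912:K)*r^5 = 0 ∨ v ι + 6 * v r < v ((6912:K)*r^5) :=
      aux_term hmul hr (fun _ => le_of_eq h6912.2.symm) (by push_cast; linarith)
    have hT4 : (-1728:K)*r^4 = 0 ∨ v ι + 6 * v r < v ((-1728:K)*r^4) :=
      aux_term hmul hr (fun _ => le_of_eq
        (by rw [show (-1728:K) = -(1728:K) by ring, aux_v_neg hmul _ h1728.1, h1728.2]))
        (by push_cast; linarith)
    have hT3 : (-144:K)*r^3 = 0 ∨ v ι + 6 * v r < v ((-144:K)*r^3) :=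
      aux_term hmul hr (fun _ => le_of_eq
        (by rw [show (-144:K) = -(144:K) by ring, aux_v_neg hmul _ h144.1, h144.2]))
        (by push_cast; linarith)
    have hT2 : (72:K)*r^2 = 0 ∨ v ι + 6 * v r < v ((72:K)*r^2) :=
      aux_term hmul hr (fun _ => le_of_eq h72.2.symm) (by push_cast; linarith)
    have hT0 : (-1:K) = 0 ∨ v ι + 6 * v r < v (-1:K) := Or.inr (by rw [hvm1]; linarith)
    have hS := aux_vgt_add hadd hT12 (aux_vgt_add hadd hT11 (aux_vgt_add hadd hT10
      (aux_vgt_add hadd hT9 (aux_vgt_add hadd hT8 (aux_vgt_add hadd hT7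
      (aux_vgt_add hadd hT5 (aux_vgt_add hadd hT4 (aux_vgt_add hadd hT3
      (aux_vgt_add hadd hT2 hT0)))))))))
    have hD : (-(ι - 6912))*r^6 ≠ 0 := mul_ne_zero hn6 (pow_ne_zero 6 hr)
    have hvD : v ((-(ι - 6912))*r^6) = v ι + 6 * v r := by
      rw [hmul _ _ hn6 (pow_ne_zero 6 hr), aux_v_pow hmul hr, hv6]; push_cast; ring
    exact aux_contra hmul hD hvD (by linear_combination hE) hS
  · right; linarith
  · -- case v ι + 6 v r > 0 : impossible
    exfalso
    have hT12 : (432*ι)*r^12 = 0 ∨ (0:ℝ) < v ((432*ι)*r^12) :=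
      aux_term hmul hr (fun _ => le_of_eq hv12.symm) (by push_cast; linarith)
    have hT11 : (-(864*ι))*r^11 = 0 ∨ (0:ℝ) < v ((-(864*ι))*r^11) :=
      aux_term hmul hr (fun _ => le_of_eq hv11.symm) (by push_cast; linarith)
    have hT10 : (648*ι)*r^10 = 0 ∨ (0:ℝ) < v ((648*ι)*r^10) :=
      aux_term hmul hr (fun _ => le_of_eq hv10.symm) (by push_cast; linarith)
    have hT9 : (-(208*ι + 110592))*r^9 = 0 ∨ (0:ℝ) < v ((-(208*ι + 110592))*r^9) :=
      aux_term hmul hr hq9 (by push_cast; linarith)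
    have hT8 : (15*ι + 165888)*r^8 = 0 ∨ (0:ℝ) < v ((15*ι + 165888)*r^8) :=
      aux_term hmul hr hq8 (by push_cast; linarith)
    have hT7 : (6*ι - 82944)*r^7 = 0 ∨ (0:ℝ) < v ((6*ι - 82944)*r^7) :=
      aux_term hmul hr hq7 (by push_cast; linarith)
    have hT6 : (-(ι - 6912))*r^6 = 0 ∨ (0:ℝ) < v ((-(ι - 6912))*r^6) :=
      aux_term hmul hr (fun _ => le_of_eq hv6.symm) (by push_cast; linarith)
    have hT5 : (6912:K)*r^5 = 0 ∨ (0:ℝ) < v ((6912:K)*r^5) :=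
      aux_term hmul hr (fun _ => le_of_eq h6912.2.symm) (by push_cast; linarith)
    have hT4 : (-1728:K)*r^4 = 0 ∨ (0:ℝ) < v ((-1728:K)*r^4) :=
      aux_term hmul hr (fun _ => le_of_eq
        (by rw [show (-1728:K) = -(1728:K) by ring, aux_v_neg hmul _ h1728.1, h1728.2]))
        (by push_cast; linarith)
    have hT3 : (-144:K)*r^3 = 0 ∨ (0:ℝ) < v ((-144:K)*r^3) :=
      aux_term hmul hr (fun _ => le_of_eq
        (by rw [show (-144:K) = -(144:K) by ring, aux_v_neg hmul _ h144.1, h144.2]))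
        (by push_cast; linarith)
    have hT2 : (72:K)*r^2 = 0 ∨ (0:ℝ) < v ((72:K)*r^2) :=
      aux_term hmul hr (fun _ => le_of_eq h72.2.symm) (by push_cast; linarith)
    have hS := aux_vgt_add hadd hT12 (aux_vgt_add hadd hT11 (aux_vgt_add hadd hT10
      (aux_vgt_add hadd hT9 (aux_vgt_add hadd hT8 (aux_vgt_add hadd hT7
      (aux_vgt_add hadd hT6 (aux_vgt_add hadd hT5 (aux_vgt_add hadd hT4
      (aux_vgt_add hadd hT3 hT2)))))))))
    exact aux_contra hmul (by norm_num : (-1:K) ≠ 0) hvm1 (by linear_combination hE) hS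


theorem stmt1 (K : Type*) [Field K] [IsAlgClosed K] (v : K → ℝ)
    (hmul : ∀ x y : K, x ≠ 0 → y ≠ 0 → v (x * y) = v x + v y)
    (hadd : ∀ x y : K, x ≠ 0 → y ≠ 0 → x + y ≠ 0 → min (v x) (v y) ≤ v (x + y))
    (hnontriv : ∃ x : K, x ≠ 0 ∧ v x ≠ 0)
    (hres2 : (2 : K) ≠ 0 ∧ v 2 = 0) (hres3 : (3 : K) ≠ 0 ∧ v 3 = 0)
    (ι : K) (hι0 : ι ≠ 0) (hι : v ι < 0)
    (P : Polynomial K)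
    (hP : P = C (432*ι) * X^12 - C (864*ι) * X^11 + C (648*ι) * X^10
        - C (208*ι + 110592) * X^9 + C (15*ι + 165888) * X^8 + C (6*ι - 82944) * X^7
        - C (ι - 6912) * X^6 + C 6912 * X^5 - C 1728 * X^4 - C 144 * X^3
        + C 72 * X^2 - 1) :
    Multiset.card P.roots = 12 ∧
    Multiset.card (P.roots.filter fun b => v b = 0) = 6 ∧
    Multiset.card (P.roots.filter fun b => v b = -v ι / 6) = 6 := by
  have h432 := aux_v23 hmul hres2 hres3 4 3
  rw [show ((2:K)^4*3^3 : K) = 432 by norm_num] at h432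
  have hn12 : (432*ι : K) ≠ 0 := mul_ne_zero h432.1 hι0
  have hv12 : v (432*ι) = v ι := by rw [hmul _ _ h432.1 hι0, h432.2]; ring
  have hdeg : P.natDegree = 12 := by
    rw [hP]
    compute_degree!
    · exact ⟨h432.1, hι0⟩
  have hsplits : P.Splits := IsAlgClosed.splits P
  have hcard : Multiset.card P.roots = 12 :=
    (Polynomial.splits_iff_card_roots.mp hsplits).trans hdeg
  have hPne : P ≠ 0 := fun h => by rw [h] at hdeg; simp at hdeg
  have heval0 : P.eval 0 = -1 := by rw [hP]; simp
  have hnz : ∀ b ∈ P.roots, b ≠ 0 := by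
    intro b hb hb0
    have h := (Polynomial.mem_roots'.mp hb).2
    rw [Polynomial.IsRoot, hb0, heval0] at h
    exact (by norm_num : (-1:K) ≠ 0) h
  have hdich : ∀ b ∈ P.roots, v b = 0 ∨ v b = -v ι / 6 := by
    intro b hb
    have h := (Polynomial.mem_roots'.mp hb).2
    rw [Polynomial.IsRoot, hP] at h
    simp only [eval_add, eval_sub, eval_mul, eval_pow, eval_C, eval_X, eval_one] at h
    exact aux_main hmul hadd hres2 hres3 hι0 hι (hnz b hb) h
  -- product of the roots
  have hc12 : P.coeff 12 = 432*ι := by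
    rw [hP]
    simp only [Polynomial.coeff_add, Polynomial.coeff_sub, Polynomial.coeff_C_mul,
      Polynomial.coeff_X_pow, Polynomial.coeff_one]
    norm_num
  have hlc : P.leadingCoeff = 432*ι := by
    rw [Polynomial.leadingCoeff, hdeg, hc12]
  have hfac := Polynomial.Splits.eq_prod_roots hsplits
  have hprod : (432*ι) * P.roots.prod = -1 := by
    have h1 := congrArg (Polynomial.eval 0) hfac
    rw [heval0, hlc, Polynomial.eval_mul, Polynomial.eval_C,
      Polynomial.eval_multiset_prod, Multiset.map_map] at h1
    have h2 : (P.roots.map (Polynomial.eval 0 ∘ fun a => X - C a)) = P.roots.map (fun a => -a) := by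
      apply Multiset.map_congr rfl
      intro x _
      simp
    rw [h2, Multiset.prod_map_neg, hcard] at h1
    rw [show ((-1:K)^12 : K) = 1 by norm_num, one_mul] at h1
    linear_combination -h1
  have hprodne : P.roots.prod ≠ 0 := by
    intro h
    rw [h, mul_zero] at hprod
    exact (by norm_num : (0:K) ≠ -1) hprod
  have hvprod : v P.roots.prod = -v ι := by
    have h1 := hmul _ _ hn12 hprodne
    rw [hprod, aux_v_neg_one hmul, hv12] at h1
    linarith
  have hsum : (P.roots.map v).sum = -v ι := by
    rw [← aux_prod hmul _ hnz, hvprod]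
  -- counting
  have hsne : (-v ι / 6 : ℝ) ≠ 0 := by intro h; rw [_root_.div_eq_zero_iff] at h; rcases h with h | h <;> linarith
  have hfsplit := Multiset.filter_add_not (fun b => v b = 0) P.roots
  have hfeq : (P.roots.filter fun b => v b = -v ι / 6)
      = (P.roots.filter fun b => ¬ v b = 0) := by
    apply Multiset.filter_congr
    intro b hb
    constructor
    · intro h h0; rw [h0] at h; exact hsne h.symm
    · intro h; rcases hdich b hb with h' | h'
      · exact absurd h' h
      · exact h'
  have hrep : ((P.roots.filter fun b => ¬ v b = 0).map v)
      = Multiset.replicate (Multiset.card (P.roots.filter fun b => ¬ v b = 0)) (-v ι / 6) := by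
    rw [Multiset.eq_replicate]
    refine ⟨by rw [Multiset.card_map], ?_⟩
    intro x hx
    rcases Multiset.mem_map.mp hx with ⟨b, hb, rfl⟩
    have hb' := Multiset.mem_of_mem_filter hb
    have hb2 := Multiset.of_mem_filter hb
    rcases hdich b hb' with h' | h'
    · exact absurd h' hb2
    · exact h'
  have hm0 : ((P.roots.filter fun b => v b = 0).map v).sum = 0 := by
    apply Multiset.sum_eq_zero
    intro x hx
    rcases Multiset.mem_map.mp hx with ⟨b, hb, rfl⟩
    have h := Multiset.of_mem_filter hb
    exact h
  have hcards : Multiset.card (P.roots.filter fun b => v b = 0)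
      + Multiset.card (P.roots.filter fun b => ¬ v b = 0) = 12 := by
    rw [← Multiset.card_add, hfsplit, hcard]
  have hsum2 : (Multiset.card (P.roots.filter fun b => ¬ v b = 0) : ℝ) * (-v ι / 6) = -v ι := by
    have h1 : (P.roots.map v).sum
        = ((P.roots.filter fun b => v b = 0).map v).sum
          + ((P.roots.filter fun b => ¬ v b = 0).map v).sum := by
      rw [← Multiset.sum_add, ← Multiset.map_add, hfsplit]
    rw [hsum, hm0, zero_add, hrep, Multiset.sum_replicate, nsmul_eq_mul] at h1
    linarith
  have hc2 : Multiset.card (P.roots.filter fun b => ¬ v b = 0) = 6 := by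
    have h6 : (6:ℝ) * (-v ι / 6) = -v ι := by ring
    have := mul_right_cancel₀ hsne (hsum2.trans h6.symm)
    exact_mod_cast this
  refine ⟨hcard, ?_, ?_⟩
  · omega
  · rw [hfeq]; exact hc2
end

section
/- Let L be an algebraically closed field of characteristic different from 2 and 3, let a, b ∈ L, and let g = a(x³+y³+z³) + b(x²y+x²z+xy²+xz²+y²z+yz²) + xyz. Assume the three partial derivatives of g have no common zero in L³ \ {(0,0,0)} (i.e., g defines a nonsingular plane cubic), and assume −3a+3b−1 ≠ 0. Set ω = (3a+6b+1)/(−3a+3b−1), fix ξ ∈ L with ξ² + ξ + 1 = 0, and fix u ∈ L with u³ = ω. Then a nonzero point (x,y,z) ∈ L³ satisfies g(x,y,z) = 0 and H_g(x,y,z) = 0, where H_g is the determinant of the 3×3 matrix of second-order partial derivatives of g, if and only if (x,y,z) is a nonzero scalar multiple of one of the following nine vectors: (1,−1,0), (1,0,−1), (0,1,−1), (1+u, 1+ξu, 1+ξ²u), (1+ξu, 1+ξ²u, 1+u), (1+ξ²u, 1+u, 1+ξu), (1+ξu, 1+u, 1+ξ²u), (1+u, 1+ξ²u, 1+ξu),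 (1+ξ²u, 1+ξu, 1+u). -/
open MvPolynomial

/-- The symmetric cubic `g = a(x³+y³+z³) + b(x²y+x²z+xy²+xz²+y²z+yz²) + xyz`. -/
noncomputable def gcubic {L : Type*} [Field L] (a b : L) : MvPolynomial (Fin 3) L :=
  C a * (X 0 ^ 3 + X 1 ^ 3 + X 2 ^ 3)
    + C b * (X 0 ^ 2 * X 1 + X 0 ^ 2 * X 2 + X 0 * X 1 ^ 2 + X 0 * X 2 ^ 2
        + X 1 ^ 2 * X 2 + X 1 * X 2 ^ 2)
    + X 0 * X 1 * X 2

/-- The Hessian: determinant of the matrix of second-order partial derivatives. -/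
noncomputable def hessianDet {L : Type*} [Field L] (g : MvPolynomial (Fin 3) L) :
    MvPolynomial (Fin 3) L :=
  Matrix.det (Matrix.of fun i j : Fin 3 => pderiv i (pderiv j g))

/-- The nine vectors giving the inflection points of a symmetric cubic. -/
def hesseRows {L : Type*} [Field L] (ξ u : L) : Fin 9 → Fin 3 → L :=
  ![![1, -1, 0],
    ![1, 0, -1],
    ![0, 1, -1],
    ![1 + u, 1 + ξ*u, 1 + ξ^2*u],
    ![1 + ξ*u, 1 + ξ^2*u, 1 + u],
    ![1 + ξ^2*u, 1 + u, 1 + ξ*u],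
    ![1 + ξ*u, 1 + u, 1 + ξ^2*u],
    ![1 + u, 1 + ξ^2*u, 1 + ξ*u],
    ![1 + ξ^2*u, 1 + ξ*u, 1 + u]]

set_option maxHeartbeats 1000000

section Aux

variable {L : Type*} [Field L]

lemma gcubic_eq (a b : L) : gcubic a b =
    C a * (X 0*X 0*X 0 + X 1*X 1*X 1 + X 2*X 2*X 2)
    + C b * (X 0*X 0*X 1 + X 0*X 0*X 2 + X 0*X 1*X 1 + X 0*X 2*X 2
        + X 1*X 1*X 2 + X 1*X 2*X 2)
    + X 0 * X 1 * X 2 := by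
  unfold gcubic; ring

lemma eval_gcubic (a b : L) (p : Fin 3 → L) :
    eval p (gcubic a b) = a*((p 0)^3+(p 1)^3+(p 2)^3)
      + b*((p 0)^2*(p 1)+(p 0)^2*(p 2)+(p 0)*(p 1)^2+(p 0)*(p 2)^2+(p 1)^2*(p 2)+(p 1)*(p 2)^2)
      + (p 0)*(p 1)*(p 2) := by
  simp [gcubic]

lemma eval_pd0 (a b : L) (p : Fin 3 → L) :
    eval p (pderiv 0 (gcubic a b)) =
      3*a*(p 0)^2 + 2*b*(p 0)*(p 1) + 2*b*(p 0)*(p 2) + b*(p 1)^2 + b*(p 2)^2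
        + (p 1)*(p 2) := by
  simp [gcubic_eq, pderiv_mul, pderiv_X]; ring

lemma eval_pd1 (a b : L) (p : Fin 3 → L) :
    eval p (pderiv 1 (gcubic a b)) =
      3*a*(p 1)^2 + b*(p 0)^2 + 2*b*(p 0)*(p 1) + 2*b*(p 1)*(p 2) + b*(p 2)^2
        + (p 0)*(p 2) := by
  simp [gcubic_eq, pderiv_mul, pderiv_X]; ring

lemma eval_pd2 (a b : L) (p : Fin 3 → L) :
    eval p (pderiv 2 (gcubic a b)) =
      3*a*(p 2)^2 + b*(p 0)^2 + b*(p 1)^2 + 2*b*(p 0)*(p 2) + 2*b*(p 1)*(p 2)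
        + (p 0)*(p 1) := by
  simp [gcubic_eq, pderiv_mul, pderiv_X]; ring

lemma hess00 (a b : L) (p : Fin 3 → L) :
    eval p (pderiv 0 (pderiv 0 (gcubic a b))) = 6*a*(p 0) + 2*b*(p 1) + 2*b*(p 2) := by
  simp [gcubic_eq, pderiv_mul, pderiv_X]; ring

lemma hess11 (a b : L) (p : Fin 3 → L) :
    eval p (pderiv 1 (pderiv 1 (gcubic a b))) = 2*b*(p 0) + 6*a*(p 1) + 2*b*(p 2) := by
  simp [gcubic_eq, pderiv_mul, pderiv_X]; ring

lemma hess22 (a b : L) (p : Fin 3 → L) :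
    eval p (pderiv 2 (pderiv 2 (gcubic a b))) = 2*b*(p 0) + 2*b*(p 1) + 6*a*(p 2) := by
  simp [gcubic_eq, pderiv_mul, pderiv_X]; ring

lemma hess01 (a b : L) (p : Fin 3 → L) :
    eval p (pderiv 0 (pderiv 1 (gcubic a b))) = 2*b*(p 0) + 2*b*(p 1) + (p 2) := by
  simp [gcubic_eq, pderiv_mul, pderiv_X]; ring

lemma hess10 (a b : L) (p : Fin 3 → L) :
    eval p (pderiv 1 (pderiv 0 (gcubic a b))) = 2*b*(p 0) + 2*b*(p 1) + (p 2) := by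
  simp [gcubic_eq, pderiv_mul, pderiv_X]; ring

lemma hess02 (a b : L) (p : Fin 3 → L) :
    eval p (pderiv 0 (pderiv 2 (gcubic a b))) = 2*b*(p 0) + (p 1) + 2*b*(p 2) := by
  simp [gcubic_eq, pderiv_mul, pderiv_X]; ring

lemma hess20 (a b : L) (p : Fin 3 → L) :
    eval p (pderiv 2 (pderiv 0 (gcubic a b))) = 2*b*(p 0) + (p 1) + 2*b*(p 2) := by
  simp [gcubic_eq, pderiv_mul, pderiv_X]; ring

lemma hess12 (a b : L) (p : Fin 3 → L) :
    eval p (pderiv 1 (pderiv 2 (gcubic a b))) = (p 0) + 2*b*(p 1) + 2*b*(p 2) := by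
  simp [gcubic_eq, pderiv_mul, pderiv_X]; ring

lemma hess21 (a b : L) (p : Fin 3 → L) :
    eval p (pderiv 2 (pderiv 1 (gcubic a b))) = (p 0) + 2*b*(p 1) + 2*b*(p 2) := by
  simp [gcubic_eq, pderiv_mul, pderiv_X]; ring

lemma eval_hess (a b : L) (p : Fin 3 → L) :
    eval p (hessianDet (gcubic a b)) =
      (-6*a + 8*b^2 - 16*b^3 + 24*a*b^2)*((p 0)^3+(p 1)^3+(p 2)^3)
      + (2*b - 24*a*b + 72*a^2*b)*((p 0)^2*(p 1)+(p 0)^2*(p 2)+(p 0)*(p 1)^2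
          +(p 0)*(p 2)^2+(p 1)^2*(p 2)+(p 1)*(p 2)^2)
      + (2 - 24*b^2 + 48*b^3 - 72*a*b^2 + 216*a^3)*((p 0)*(p 1)*(p 2)) := by
  rw [hessianDet, Matrix.det_fin_three]
  simp only [Matrix.of_apply, map_add, map_sub, map_mul]
  rw [hess00 a b p, hess01 a b p, hess02 a b p, hess10 a b p, hess11 a b p, hess12 a b p,
    hess20 a b p, hess21 a b p, hess22 a b p]
  ring

lemma funext3 {p q : Fin 3 → L} (h0 : p 0 = q 0) (h1 : p 1 = q 1) (h2 : p 2 = q 2) :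
    p = q := by
  funext j; fin_cases j <;> assumption

lemma gval (a b c x y z : L) (h1 : x+y+z = 3*c) (h2 : x*y+x*z+y*z = 3*c^2)
    (h3 : (-3*a+3*b-1)*(x*y*z) = 9*b*c^3) :
    a*(x^3+y^3+z^3) + b*(x^2*y+x^2*z+x*y^2+x*z^2+y^2*z+y*z^2) + x*y*z = 0 := by
  linear_combination (a*((x+y+z)^2+3*c*(x+y+z)+9*c^2)+3*c^2*(b-3*a))*h1
    + ((b-3*a)*(x+y+z))*h2 - h3

lemma hval (a b c x y z : L) (hden : -3*a + 3*b - 1 ≠ 0)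
    (h1 : x+y+z = 3*c) (h2 : x*y+x*z+y*z = 3*c^2)
    (h3 : (-3*a+3*b-1)*(x*y*z) = 9*b*c^3) :
    (-6*a + 8*b^2 - 16*b^3 + 24*a*b^2)*(x^3+y^3+z^3)
      + (2*b - 24*a*b + 72*a^2*b)*(x^2*y+x^2*z+x*y^2+x*z^2+y^2*z+y*z^2)
      + (2 - 24*b^2 + 48*b^3 - 72*a*b^2 + 216*a^3)*(x*y*z) = 0 := by
  have H : (-3*a+3*b-1) * ((-6*a + 8*b^2 - 16*b^3 + 24*a*b^2)*(x^3+y^3+z^3)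
      + (2*b - 24*a*b + 72*a^2*b)*(x^2*y+x^2*z+x*y^2+x*z^2+y^2*z+y*z^2)
      + (2 - 24*b^2 + 48*b^3 - 72*a*b^2 + 216*a^3)*(x*y*z)) = 0 := by
    linear_combination
      ((-3*a+3*b-1)*((-6*a + 8*b^2 - 16*b^3 + 24*a*b^2)*((x+y+z)^2+3*c*(x+y+z)+9*c^2)
        + 3*c^2*(2*b - 24*b^2 + 48*b^3 + 18*a - 24*a*b - 72*a*b^2 + 72*a^2*b)))*h1
      + ((-3*a+3*b-1)*(2*b - 24*b^2 + 48*b^3 + 18*a - 24*a*b - 72*a*b^2 + 72*a^2*b)*(x+y+z))*h2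
      + (2 - 6*b - 18*a + 72*a*b - 216*a^2*b + 216*a^3)*h3
  exact (mul_eq_zero.mp H).resolve_left hden

/-- If `S(a,b) = 0` then the cubic is singular. -/
lemma sing [IsAlgClosed L] (h2 : (2 : L) ≠ 0) (h3 : (3 : L) ≠ 0) (a b : L)
    (hS : 9*a^3-3*a^2-3*a*b^2+a+2*b^3-b^2 = 0) :
    ∃ p : Fin 3 → L, p ≠ 0 ∧ ∀ i : Fin 3, eval p (pderiv i (gcubic a b)) = 0 := by
  by_cases hα : 4*b^2-6*a*b-3*a = 0
  · by_cases ha : a = 0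
    · -- then b = 0
      have hb20 : (2*b)^2 = 0 := by linear_combination hα + (6*b+3)*ha
      have hb : b = 0 := by
        have h2b := sq_eq_zero_iff.mp hb20
        exact (mul_eq_zero.mp h2b).resolve_left h2
      refine ⟨![1,0,0], ?_, ?_⟩
      · intro h
        have := congrFun h 0
        simp at this
      · intro i; fin_cases i
        · show eval ![(1:L),0,0] (pderiv 0 (gcubic a b)) = 0
          rw [eval_pd0]; simp [ha, hb]
        · show eval ![(1:L),0,0] (pderiv 1 (gcubic a b)) = 0
          rw [eval_pd1]; simp [ha, hb]
        · show eval ![(1:L),0,0] (pderiv 2 (gcubic a b)) = 0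
          rw [eval_pd2]; simp [ha, hb]
    · -- a ≠ 0 : here 2b+1 ≠ 0, β = 0, and we take a root of f1
      have hb1 : (2*b+1) ≠ 0 := by
        intro h
        have h1 : (1:L) = 0 := by linear_combination hα - (2*b-1-3*a)*h
        exact one_ne_zero h1
      have hb0 : b*(1-2*b)*(1+4*b) = 0 := by
        have h9 : (3*(b*(1-2*b)*(1+4*b)))^2 = 0 := by
          linear_combination (27*(2*b+1)^3)*hS
            - (-9 - 36*b + 27*b^2 + 180*b^3 - 36*b^4 + 27*a + 108*a*b - 216*a*b^3
               - 81*a^2 - 324*a^2*b - 324*a^2*b^2)*hα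
        have h9' := sq_eq_zero_iff.mp h9
        exact (mul_eq_zero.mp h9').resolve_left h3
      have hβ : 2*b^2+b-9*a^2-9*a*b = 0 := by
        have h : (2*b^2+b-9*a^2-9*a*b) * (3*(2*b+1))^2 = 0 := by
          linear_combination (9*(1+4*b))*hb0 + (27*b + 90*b^2 + 27*a + 54*a*b)*hα
        exact (mul_eq_zero.mp h).resolve_right
          (pow_ne_zero _ (mul_ne_zero h3 hb1))
      obtain ⟨t, ht⟩ := IsAlgClosed.exists_pow_nat_eq (16*b^2 - 12*a*(2*b+1)) (n := 2) (by norm_num)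
      set x : L := (-4*b + t)/(6*a) with hxdef
      have h6a : (6:L)*a ≠ 0 := by
        have h6 : (6:L) ≠ 0 := by
          have : (6:L) = 2*3 := by norm_num
          rw [this]; exact mul_ne_zero h2 h3
        exact mul_ne_zero h6 ha
      have hX : 6*a*x = -4*b + t := by
        rw [hxdef]; exact mul_div_cancel₀ (-4*b + t) h6a
      have hf1 : 3*a*x^2 + 4*b*x + (2*b+1) = 0 := by
        have h12 : 12*a*(3*a*x^2 + 4*b*x + (2*b+1)) = 0 := by
          have e : 12*a*(3*a*x^2 + 4*b*x + (2*b+1))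
              = (6*a*x)^2 + 8*b*(6*a*x) + 12*a*(2*b+1) := by ring
          rw [e, hX]; linear_combination ht
        have h12a : (12:L)*a ≠ 0 := by
          have h12' : (12:L) ≠ 0 := by
            have : (12:L) = 2^2*3 := by norm_num
            rw [this]; exact mul_ne_zero (pow_ne_zero _ h2) h3
          exact mul_ne_zero h12' ha
        exact (mul_eq_zero.mp h12).resolve_left h12a
      have hf2 : b*x^2 + (2*b+1)*x + (3*a+3*b) = 0 := by
        have e : 3*a*(b*x^2 + (2*b+1)*x + (3*a+3*b))
            = b*(3*a*x^2 + 4*b*x + (2*b+1))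
              - ((4*b^2-6*a*b-3*a)*x + (2*b^2+b-9*a^2-9*a*b)) := by ring
        have h0 : 3*a*(b*x^2 + (2*b+1)*x + (3*a+3*b)) = 0 := by
          rw [e, hf1, hα, hβ]; ring
        exact (mul_eq_zero.mp h0).resolve_left (mul_ne_zero h3 ha)
      refine ⟨![x,1,1], ?_, ?_⟩
      · intro h
        have := congrFun h 1
        simp at this
      · intro i; fin_cases i
        · show eval ![x,1,1] (pderiv 0 (gcubic a b)) = 0
          rw [eval_pd0]; simp; linear_combination hf1
        · show eval ![x,1,1] (pderiv 1 (gcubic a b)) = 0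
          rw [eval_pd1]; simp; linear_combination hf2
        · show eval ![x,1,1] (pderiv 2 (gcubic a b)) = 0
          rw [eval_pd2]; simp; linear_combination hf2
  · -- α ≠ 0, take x = -β/α
    set α : L := 4*b^2-6*a*b-3*a with hαdef
    set x : L := -(2*b^2+b-9*a^2-9*a*b)/α with hxdef
    have hXα : x*α = -(2*b^2+b-9*a^2-9*a*b) := by
      rw [hxdef]; field_simp
    have hf1 : 3*a*x^2 + 4*b*x + (2*b+1) = 0 := by
      have P1 : 3*a*(x*α)^2 + 4*b*(x*α)*α + (2*b+1)*α^2 = 0 := by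
        rw [hXα, hαdef]; linear_combination (9*a*(1+6*b+3*a))*hS
      have h0 : (3*a*x^2 + 4*b*x + (2*b+1))*α^2 = 0 := by linear_combination P1
      exact (mul_eq_zero.mp h0).resolve_right (pow_ne_zero _ hα)
    have hf2 : b*x^2 + (2*b+1)*x + (3*a+3*b) = 0 := by
      have P2 : b*(x*α)^2 + (2*b+1)*(x*α)*α + (3*a+3*b)*α^2 = 0 := by
        rw [hXα, hαdef]; linear_combination (3*b*(1+6*b+3*a))*hS
      have h0 : (b*x^2 + (2*b+1)*x + (3*a+3*b))*α^2 = 0 := by linear_combination P2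
      exact (mul_eq_zero.mp h0).resolve_right (pow_ne_zero _ hα)
    refine ⟨![x,1,1], ?_, ?_⟩
    · intro h
      have := congrFun h 1
      simp at this
    · intro i; fin_cases i
      · show eval ![x,1,1] (pderiv 0 (gcubic a b)) = 0
        rw [eval_pd0]; simp; linear_combination hf1
      · show eval ![x,1,1] (pderiv 1 (gcubic a b)) = 0
        rw [eval_pd1]; simp; linear_combination hf2
      · show eval ![x,1,1] (pderiv 2 (gcubic a b)) = 0
        rw [eval_pd2]; simp; linear_combination hf2

end Aux

theorem stmt2 (L : Type*) [Field L] [IsAlgClosed L]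
    (h2 : (2 : L) ≠ 0) (h3 : (3 : L) ≠ 0)
    (a b : L)
    (hsmooth : ∀ p : Fin 3 → L, p ≠ 0 →
      ¬ (∀ i : Fin 3, eval p (pderiv i (gcubic a b)) = 0))
    (hden : -3*a + 3*b - 1 ≠ 0)
    (ξ : L) (hξ : ξ^2 + ξ + 1 = 0)
    (u : L) (hu : u^3 = (3*a + 6*b + 1) / (-3*a + 3*b - 1)) :
    ∀ p : Fin 3 → L, p ≠ 0 →
      ((eval p (gcubic a b) = 0 ∧ eval p (hessianDet (gcubic a b)) = 0) ↔
        ∃ (c : L) (i : Fin 9), c ≠ 0 ∧ p = c • hesseRows ξ u i) := by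
  have hu' : u^3*(-3*a+3*b-1) = 3*a+6*b+1 := by
    rw [hu]; exact div_mul_cancel₀ _ hden
  intro p hp
  constructor
  · rintro ⟨hg, hH⟩
    rw [eval_gcubic] at hg
    rw [eval_hess] at hH
    set x := p 0 with hxd
    set y := p 1 with hyd
    set z := p 2 with hzd
    have hp' : ¬(x = 0 ∧ y = 0 ∧ z = 0) := by
      rintro ⟨a0, a1, a2⟩
      exact hp (funext3 a0 a1 a2)
    by_cases hE1 : x + y + z = 0
    · -- the three points on x+y+z = 0
      have hden' : (3*a-3*b+1) ≠ 0 := fun h => hden (by linear_combination -h)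
      have hxyz : x*y*z = 0 := by
        have h := hg
        have h0 : (3*a-3*b+1)*(x*y*z) = 0 := by
          linear_combination hg - (a*(x+y+z)^2+(b-3*a)*(x*y+x*z+y*z))*hE1
        exact (mul_eq_zero.mp h0).resolve_left hden'
      by_cases hx0 : x = 0
      · have hzy : z = -y := by linear_combination hE1 - hx0
        have hy0 : y ≠ 0 := by
          intro h
          exact hp' ⟨hx0, h, by linear_combination hE1 - hx0 - h⟩
        refine ⟨y, 2, hy0, funext3 ?_ ?_ ?_⟩
        · show x = y * 0
          linear_combination hx0
        · show y = y * 1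
          ring
        · show z = y * (-1)
          linear_combination hzy
      · by_cases hy0 : y = 0
        · have hzx : z = -x := by linear_combination hE1 - hy0
          refine ⟨x, 1, hx0, funext3 ?_ ?_ ?_⟩
          · show x = x * 1
            ring
          · show y = x * 0
            linear_combination hy0
          · show z = x * (-1)
            linear_combination hzx
        · have hz0 : z = 0 := by
            rcases mul_eq_zero.mp hxyz with h | h
            · rcases mul_eq_zero.mp h with h' | h'
              · exact absurd h' hx0
              · exact absurd h' hy0
            · exact h
          have hyx : y = -x := by linear_combination hE1 - hz0
          refine ⟨x, 0, hx0, funext3 ?_ ?_ ?_⟩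
          · show x = x * 1
            ring
          · show y = x * (-1)
            linear_combination hyx
          · show z = x * 0
            linear_combination hz0
    · -- the six points off x+y+z = 0
      set c : L := (x+y+z)/3 with hcdef
      have hc : x + y + z = 3*c := by rw [hcdef]; field_simp
      have hc0 : c ≠ 0 := by
        intro h
        exact hE1 (by rw [hc, h]; ring)
      have hSne : (9*a^3-3*a^2-3*a*b^2+a+2*b^3-b^2) ≠ 0 := by
        intro h
        obtain ⟨q, hq0, hqall⟩ := sing h2 h3 a b h
        exact hsmooth q hq0 hqall
      have hdenp : (3*a-3*b+1) ≠ 0 := fun h => hden (by linear_combination -h)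
      have e1 : a*(3*c)^3 + (b-3*a)*(3*c)*(x*y+x*z+y*z) + (3*a-3*b+1)*(x*y*z) = 0 := by
        linear_combination hg - (a*((x+y+z)^2+3*c*(x+y+z)+9*c^2)+(b-3*a)*(x*y+x*z+y*z))*hc
      have e2 : (-6*a + 8*b^2 - 16*b^3 + 24*a*b^2)*(3*c)^3
          + (2*b - 24*b^2 + 48*b^3 + 18*a - 24*a*b - 72*a*b^2 + 72*a^2*b)*(3*c)*(x*y+x*z+y*z)
          + (2 - 6*b - 18*a + 72*a*b - 216*a^2*b + 216*a^3)*(x*y*z) = 0 := by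
        linear_combination hH
          - ((-6*a + 8*b^2 - 16*b^3 + 24*a*b^2)*((x+y+z)^2+3*c*(x+y+z)+9*c^2)
             + (2*b - 24*b^2 + 48*b^3 + 18*a - 24*a*b - 72*a*b^2 + 72*a^2*b)*(x*y+x*z+y*z))*hc
      have h72 : (72*c*(3*a-3*b+1)*(9*a^3-3*a^2-3*a*b^2+a+2*b^3-b^2))
          * ((x*y+x*z+y*z) - 3*c^2) = 0 := by
        linear_combination (-(2 - 6*b - 18*a + 72*a*b - 216*a^2*b + 216*a^3))*e1
          + (3*a-3*b+1)*e2
      have hfac : (72*c*(3*a-3*b+1)*(9*a^3-3*a^2-3*a*b^2+a+2*b^3-b^2)) ≠ 0 := by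
        have h72' : (72:L) ≠ 0 := by
          have : (72:L) = 2^3*3^2 := by norm_num
          rw [this]; exact mul_ne_zero (pow_ne_zero _ h2) (pow_ne_zero _ h3)
        exact mul_ne_zero (mul_ne_zero (mul_ne_zero h72' hc0) hdenp) hSne
      have hd2 : x*y+x*z+y*z = 3*c^2 := by
        have := (mul_eq_zero.mp h72).resolve_left hfac
        linear_combination this
      have hd3 : (-3*a+3*b-1)*(x*y*z) = 9*b*c^3 := by
        have h' : (3*a-3*b+1)*(x*y*z) = -(9*b*c^3) := by
          linear_combination e1 - (3*c*(b-3*a))*hd2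
        linear_combination -h'
      have keyden : (-3*a+3*b-1) * ((x - c*(1+u))*((x - c*(1+ξ*u))*(x - c*(1+ξ^2*u)))) = 0 := by
        linear_combination ((-3*a+3*b-1)*x^2)*hc - ((-3*a+3*b-1)*x)*hd2 + hd3 - c^3*hu'
          + ((-3*a+3*b-1)*(-(c*u)*x^2 + c^2*(2*u+u^2*ξ)*x - c^3*(u+u^2*ξ+u^3*ξ-u^3)))*hξ
      have key := (mul_eq_zero.mp keyden).resolve_left hden
      rcases mul_eq_zero.mp key with hx1 | hrest
      · -- x = c(1+u)
        have hx : x = c*(1+u) := by linear_combination hx1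
        have hsum : y + z = c*(2-u) := by linear_combination hc - hx
        have hyzp : y*z = c^2*(1-u+u^2) := by
          linear_combination hd2 - (y+z)*hx - (c*(1+u))*hsum
        have key2 : (y - c*(1+ξ*u))*(y - c*(1+ξ^2*u)) = 0 := by
          linear_combination y*hsum - hyzp + (-(c*u)*y + c^2*(u+u^2*ξ-u^2))*hξ
        rcases mul_eq_zero.mp key2 with hy1 | hy1
        · have hy : y = c*(1+ξ*u) := by linear_combination hy1
          have hz : z = c*(1+ξ^2*u) := by linear_combination hsum - hy - (c*u)*hξ
          refine ⟨c, 3, hc0, funext3 ?_ ?_ ?_⟩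
          · show x = c * (1 + u)
            exact hx
          · show y = c * (1 + ξ*u)
            exact hy
          · show z = c * (1 + ξ^2*u)
            exact hz
        · have hy : y = c*(1+ξ^2*u) := by linear_combination hy1
          have hz : z = c*(1+ξ*u) := by linear_combination hsum - hy - (c*u)*hξ
          refine ⟨c, 7, hc0, funext3 ?_ ?_ ?_⟩
          · show x = c * (1 + u)
            exact hx
          · show y = c * (1 + ξ^2*u)
            exact hy
          · show z = c * (1 + ξ*u)
            exact hz
      rcases mul_eq_zero.mp hrest with hx1 | hx1
      · -- x = c(1+ξu)
        have hx : x = c*(1+ξ*u) := by linear_combination hx1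
        have hsum : y + z = c*(2-ξ*u) := by linear_combination hc - hx
        have hyzp : y*z = c^2*(1-ξ*u+ξ^2*u^2) := by
          linear_combination hd2 - (y+z)*hx - (c*(1+ξ*u))*hsum
        have key2 : (y - c*(1+u))*(y - c*(1+ξ^2*u)) = 0 := by
          linear_combination y*hsum - hyzp + (c^2*u - y*c*u)*hξ
        rcases mul_eq_zero.mp key2 with hy1 | hy1
        · have hy : y = c*(1+u) := by linear_combination hy1
          have hz : z = c*(1+ξ^2*u) := by linear_combination hsum - hy - (c*u)*hξ
          refine ⟨c, 6, hc0, funext3 ?_ ?_ ?_⟩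
          · show x = c * (1 + ξ*u)
            exact hx
          · show y = c * (1 + u)
            exact hy
          · show z = c * (1 + ξ^2*u)
            exact hz
        · have hy : y = c*(1+ξ^2*u) := by linear_combination hy1
          have hz : z = c*(1+u) := by linear_combination hsum - hy - (c*u)*hξ
          refine ⟨c, 4, hc0, funext3 ?_ ?_ ?_⟩
          · show x = c * (1 + ξ*u)
            exact hx
          · show y = c * (1 + ξ^2*u)
            exact hy
          · show z = c * (1 + u)
            exact hz
      · -- x = c(1+ξ²u)
        have hx : x = c*(1+ξ^2*u) := by linear_combination hx1
        have hsum : y + z = c*(2-ξ^2*u) := by linear_combination hc - hx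
        have hyzp : y*z = c^2*(1-ξ^2*u+ξ*u^2) := by
          linear_combination hd2 - (y+z)*hx - (c*(1+ξ^2*u))*hsum
            + (c^2*u^2*ξ^2 - c^2*u^2*ξ)*hξ
        have key2 : (y - c*(1+u))*(y - c*(1+ξ*u)) = 0 := by
          linear_combination y*hsum - hyzp + (c^2*u - y*c*u)*hξ
        rcases mul_eq_zero.mp key2 with hy1 | hy1
        · have hy : y = c*(1+u) := by linear_combination hy1
          have hz : z = c*(1+ξ*u) := by linear_combination hsum - hy - (c*u)*hξ
          refine ⟨c, 5, hc0, funext3 ?_ ?_ ?_⟩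
          · show x = c * (1 + ξ^2*u)
            exact hx
          · show y = c * (1 + u)
            exact hy
          · show z = c * (1 + ξ*u)
            exact hz
        · have hy : y = c*(1+ξ*u) := by linear_combination hy1
          have hz : z = c*(1+u) := by linear_combination hsum - hy - (c*u)*hξ
          refine ⟨c, 8, hc0, funext3 ?_ ?_ ?_⟩
          · show x = c * (1 + ξ^2*u)
            exact hx
          · show y = c * (1 + ξ*u)
            exact hy
          · show z = c * (1 + u)
            exact hz
  · rintro ⟨c, i, hc0, rfl⟩
    have hg6 : a*((c*(1+u))^3+(c*(1+ξ*u))^3+(c*(1+ξ^2*u))^3)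
        + b*((c*(1+u))^2*(c*(1+ξ*u))+(c*(1+u))^2*(c*(1+ξ^2*u))+(c*(1+u))*(c*(1+ξ*u))^2
            +(c*(1+u))*(c*(1+ξ^2*u))^2+(c*(1+ξ*u))^2*(c*(1+ξ^2*u))+(c*(1+ξ*u))*(c*(1+ξ^2*u))^2)
        + (c*(1+u))*(c*(1+ξ*u))*(c*(1+ξ^2*u)) = 0 :=
      gval a b c (c*(1+u)) (c*(1+ξ*u)) (c*(1+ξ^2*u))
        (by linear_combination (c*u)*hξ)
        (by linear_combination (c^2*(2*u+u^2*ξ))*hξ)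
        (by linear_combination c^3*hu' + ((-3*a+3*b-1)*c^3*(u+u^2*ξ+u^3*ξ-u^3))*hξ)
    have hH6 : (-6*a + 8*b^2 - 16*b^3 + 24*a*b^2)*((c*(1+u))^3+(c*(1+ξ*u))^3+(c*(1+ξ^2*u))^3)
        + (2*b - 24*a*b + 72*a^2*b)*((c*(1+u))^2*(c*(1+ξ*u))+(c*(1+u))^2*(c*(1+ξ^2*u))
            +(c*(1+u))*(c*(1+ξ*u))^2+(c*(1+u))*(c*(1+ξ^2*u))^2
            +(c*(1+ξ*u))^2*(c*(1+ξ^2*u))+(c*(1+ξ*u))*(c*(1+ξ^2*u))^2)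
        + (2 - 24*b^2 + 48*b^3 - 72*a*b^2 + 216*a^3)*((c*(1+u))*(c*(1+ξ*u))*(c*(1+ξ^2*u))) = 0 :=
      hval a b c (c*(1+u)) (c*(1+ξ*u)) (c*(1+ξ^2*u)) hden
        (by linear_combination (c*u)*hξ)
        (by linear_combination (c^2*(2*u+u^2*ξ))*hξ)
        (by linear_combination c^3*hu' + ((-3*a+3*b-1)*c^3*(u+u^2*ξ+u^3*ξ-u^3))*hξ)
    have key : ∀ x y z : L, (c • hesseRows ξ u i) 0 = x → (c • hesseRows ξ u i) 1 = y →
        (c • hesseRows ξ u i) 2 = z →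
        (a*(x^3+y^3+z^3) + b*(x^2*y+x^2*z+x*y^2+x*z^2+y^2*z+y*z^2) + x*y*z = 0) →
        ((-6*a + 8*b^2 - 16*b^3 + 24*a*b^2)*(x^3+y^3+z^3)
          + (2*b - 24*a*b + 72*a^2*b)*(x^2*y+x^2*z+x*y^2+x*z^2+y^2*z+y*z^2)
          + (2 - 24*b^2 + 48*b^3 - 72*a*b^2 + 216*a^3)*(x*y*z) = 0) →
        (eval (c • hesseRows ξ u i) (gcubic a b) = 0 ∧
          eval (c • hesseRows ξ u i) (hessianDet (gcubic a b)) = 0) := by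
      intro x y z e0 e1 e2 hgz hHz
      rw [eval_gcubic, eval_hess, e0, e1, e2]
      exact ⟨hgz, hHz⟩
    fin_cases i
    · exact key (c*1) (c*(-1)) (c*0) rfl rfl rfl (by ring) (by ring)
    · exact key (c*1) (c*0) (c*(-1)) rfl rfl rfl (by ring) (by ring)
    · exact key (c*0) (c*1) (c*(-1)) rfl rfl rfl (by ring) (by ring)
    · exact key (c*(1+u)) (c*(1+ξ*u)) (c*(1+ξ^2*u)) rfl rfl rfl
        (by linear_combination hg6) (by linear_combination hH6)
    · exact key (c*(1+ξ*u)) (c*(1+ξ^2*u)) (c*(1+u)) rfl rfl rfl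
        (by linear_combination hg6) (by linear_combination hH6)
    · exact key (c*(1+ξ^2*u)) (c*(1+u)) (c*(1+ξ*u)) rfl rfl rfl
        (by linear_combination hg6) (by linear_combination hH6)
    · exact key (c*(1+ξ*u)) (c*(1+u)) (c*(1+ξ^2*u)) rfl rfl rfl
        (by linear_combination hg6) (by linear_combination hH6)
    · exact key (c*(1+u)) (c*(1+ξ^2*u)) (c*(1+ξ*u)) rfl rfl rfl
        (by linear_combination hg6) (by linear_combination hH6)
    · exact key (c*(1+ξ^2*u)) (c*(1+ξ*u)) (c*(1+u)) rfl rfl rfl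
        (by linear_combination hg6) (by linear_combination hH6)
end

section
/- Let Q > 0 and A, X ∈ ℝ. Then the sum ∑_{n>0} min(0, nQ + X − A) + ∑_{n≥0} min(0, nQ + A − X) (in which only finitely many terms are nonzero, so the sum is a well-defined real number) equals the infimum over m ∈ ℤ of ((m² − m)/2)·Q + m·(A − X); moreover this infimum is attained by some integer m. -/
private lemma gauss_sum (Q Y : ℝ) (m : ℕ) :
    ∑ k ∈ Finset.range m, ((k:ℝ) * Q + Y)
      = (((m:ℝ)^2 - (m:ℝ)) / 2) * Q + (m:ℝ) * Y := by
  induction m with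
  | zero => simp
  | succ n ih => rw [Finset.sum_range_succ, ih]; push_cast; ring

private lemma gauss_sum_neg (Q Y : ℝ) (m : ℕ) :
    ∑ j ∈ Finset.range m, (((j:ℝ) + 1) * Q - Y)
      = (((-(m:ℝ))^2 - (-(m:ℝ))) / 2) * Q + (-(m:ℝ)) * Y := by
  induction m with
  | zero => simp
  | succ n ih => rw [Finset.sum_range_succ, ih]; push_cast; ring

theorem stmt5 (Q A X : ℝ) (hQ : 0 < Q) :
    {n : ℕ | min 0 (((n : ℝ) + 1) * Q + X - A) ≠ 0}.Finite ∧
    {n : ℕ | min 0 ((n : ℝ) * Q + A - X) ≠ 0}.Finite ∧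
    IsLeast
      (Set.range fun m : ℤ => (((m : ℝ)^2 - (m : ℝ)) / 2) * Q + (m : ℝ) * (A - X))
      ((∑' n : ℕ, min 0 (((n : ℝ) + 1) * Q + X - A))
        + ∑' n : ℕ, min 0 ((n : ℝ) * Q + A - X)) := by
  set N : ℕ := ⌊(A - X) / Q⌋₊ with hN
  set M : ℕ := ⌊(X - A) / Q⌋₊ with hM
  -- vanishing of terms for large n
  have h1zero : ∀ n : ℕ, N ≤ n → min 0 (((n : ℝ) + 1) * Q + X - A) = 0 := by
    intro n hn
    have h1 : (A - X) / Q < (N : ℝ) + 1 := Nat.lt_floor_add_one _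
    have h2 : (N : ℝ) ≤ (n : ℝ) := by exact_mod_cast hn
    have h3 : (A - X) / Q < (n : ℝ) + 1 := by linarith
    have h4 : A - X < ((n : ℝ) + 1) * Q := by
      rwa [div_lt_iff₀ hQ] at h3
    exact min_eq_left (by linarith)
  have h2zero : ∀ n : ℕ, M + 1 ≤ n → min 0 ((n : ℝ) * Q + A - X) = 0 := by
    intro n hn
    have h1 : (X - A) / Q < (M : ℝ) + 1 := Nat.lt_floor_add_one _
    have h2 : (M : ℝ) + 1 ≤ (n : ℝ) := by exact_mod_cast hn
    have h3 : (X - A) / Q < (n : ℝ) := by linarith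
    have h4 : X - A < (n : ℝ) * Q := by rwa [div_lt_iff₀ hQ] at h3
    exact min_eq_left (by linarith)
  have hfin1 : {n : ℕ | min 0 (((n : ℝ) + 1) * Q + X - A) ≠ 0}.Finite := by
    apply Set.Finite.subset (Finset.range N).finite_toSet
    intro n hn
    simp only [Set.mem_setOf_eq] at hn
    simp only [Finset.coe_range, Set.mem_Iio]
    by_contra h
    exact hn (h1zero n (le_of_not_gt h))
  have hfin2 : {n : ℕ | min 0 ((n : ℝ) * Q + A - X) ≠ 0}.Finite := by
    apply Set.Finite.subset (Finset.range (M + 1)).finite_toSet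
    intro n hn
    simp only [Set.mem_setOf_eq] at hn
    simp only [Finset.coe_range, Set.mem_Iio]
    by_contra h
    exact hn (h2zero n (le_of_not_gt h))
  refine ⟨hfin1, hfin2, ?_, ?_⟩
  · -- membership: the value is attained
    rcases le_or_gt (A - X) 0 with hY | hY
    · -- A - X ≤ 0 : first tsum is 0
      have hT1 : (∑' n : ℕ, min 0 (((n : ℝ) + 1) * Q + X - A)) = 0 := by
        rw [tsum_congr (g := fun _ : ℕ => (0:ℝ)) ?_, tsum_zero]
        intro n
        apply min_eq_left
        have : (0:ℝ) ≤ (n : ℝ) := n.cast_nonneg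
        nlinarith
      have hT2 : (∑' n : ℕ, min 0 ((n : ℝ) * Q + A - X))
          = ∑ n ∈ Finset.range (M + 1), ((n : ℝ) * Q + (A - X)) := by
        rw [tsum_eq_sum (s := Finset.range (M + 1))
          (fun n hn => h2zero n (le_of_not_gt fun h => hn (Finset.mem_range.mpr h)))]
        · apply Finset.sum_congr rfl
          intro n hn
          have hn' : (n : ℝ) ≤ (M : ℝ) := by
            exact_mod_cast Nat.lt_succ_iff.mp (Finset.mem_range.mp hn)
          have hfl : (M : ℝ) ≤ (X - A) / Q := Nat.floor_le (div_nonneg (by linarith) hQ.le)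
          have : (n : ℝ) * Q ≤ X - A := by
            rw [le_div_iff₀ hQ] at hfl
            nlinarith
          rw [min_eq_right (by linarith)]
          ring
      refine ⟨(M : ℤ) + 1, ?_⟩
      rw [hT1, hT2, gauss_sum Q (A - X) (M + 1)]
      push_cast
      ring
    · -- 0 < A - X : second tsum is 0
      have hT2 : (∑' n : ℕ, min 0 ((n : ℝ) * Q + A - X)) = 0 := by
        rw [tsum_congr (g := fun _ : ℕ => (0:ℝ)) ?_, tsum_zero]
        intro n
        apply min_eq_left
        have : (0:ℝ) ≤ (n : ℝ) := n.cast_nonneg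
        nlinarith
      have hT1 : (∑' n : ℕ, min 0 (((n : ℝ) + 1) * Q + X - A))
          = ∑ j ∈ Finset.range N, (((j : ℝ) + 1) * Q - (A - X)) := by
        rw [tsum_eq_sum (s := Finset.range N)
          (fun n hn => h1zero n (le_of_not_gt fun h => hn (Finset.mem_range.mpr h)))]
        apply Finset.sum_congr rfl
        intro j hj
        have hj' : (j : ℝ) + 1 ≤ (N : ℝ) := by
          exact_mod_cast Nat.succ_le_of_lt (Finset.mem_range.mp hj)
        have hfl : (N : ℝ) ≤ (A - X) / Q := Nat.floor_le (div_nonneg (by linarith) hQ.le)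
        have : ((j : ℝ) + 1) * Q ≤ A - X := by
          rw [le_div_iff₀ hQ] at hfl
          nlinarith
        rw [min_eq_right (by linarith)]
        ring
      refine ⟨-(N : ℤ), ?_⟩
      rw [hT1, hT2, gauss_sum_neg Q (A - X) N]
      push_cast
      ring
  · -- lower bound
    rintro z ⟨m, rfl⟩
    have hnonpos1 : (∑' n : ℕ, min 0 (((n : ℝ) + 1) * Q + X - A)) ≤ 0 :=
      tsum_nonpos fun n => min_le_left _ _
    have hnonpos2 : (∑' n : ℕ, min 0 ((n : ℝ) * Q + A - X)) ≤ 0 :=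
      tsum_nonpos fun n => min_le_left _ _
    rcases m with k | k
    · -- m = k ≥ 0 : bound second tsum by partial sum of length k
      set L : ℕ := max (M + 1) k with hL
      have hT2 : (∑' n : ℕ, min 0 ((n : ℝ) * Q + A - X))
          = ∑ n ∈ Finset.range L, min 0 ((n : ℝ) * Q + A - X) := by
        refine tsum_eq_sum fun n hn => h2zero n ?_
        have := le_of_not_gt fun h => hn (Finset.mem_range.mpr h)
        omega
      have hsplit : ∑ n ∈ Finset.range L, min 0 ((n : ℝ) * Q + A - X)
          = ∑ n ∈ Finset.range k, min 0 ((n : ℝ) * Q + A - X)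
            + ∑ n ∈ Finset.Ico k L, min 0 ((n : ℝ) * Q + A - X) := by
        rw [Finset.range_eq_Ico, Finset.range_eq_Ico]
        exact (Finset.sum_Ico_consecutive _ (Nat.zero_le k) (le_max_right _ _)).symm
      have htail : ∑ n ∈ Finset.Ico k L, min 0 ((n : ℝ) * Q + A - X) ≤ 0 :=
        Finset.sum_nonpos fun n _ => min_le_left _ _
      have hbound : ∑ n ∈ Finset.range k, min 0 ((n : ℝ) * Q + A - X)
          ≤ ∑ n ∈ Finset.range k, ((n : ℝ) * Q + (A - X)) := by
        apply Finset.sum_le_sum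
        intro n _
        calc min 0 ((n : ℝ) * Q + A - X) ≤ (n : ℝ) * Q + A - X := min_le_right _ _
          _ = (n : ℝ) * Q + (A - X) := by ring
      have hg := gauss_sum Q (A - X) k
      have : (∑' n : ℕ, min 0 (((n : ℝ) + 1) * Q + X - A))
          + ∑' n : ℕ, min 0 ((n : ℝ) * Q + A - X)
          ≤ (((k:ℝ)^2 - (k:ℝ)) / 2) * Q + (k:ℝ) * (A - X) := by
        rw [hT2, hsplit, ← hg]
        linarith
      simpa using this
    · -- m = -(k+1)
      set K : ℕ := k + 1 with hK
      set L : ℕ := max N K with hL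
      have hT1 : (∑' n : ℕ, min 0 (((n : ℝ) + 1) * Q + X - A))
          = ∑ n ∈ Finset.range L, min 0 (((n : ℝ) + 1) * Q + X - A) := by
        refine tsum_eq_sum fun n hn => h1zero n ?_
        have := le_of_not_gt fun h => hn (Finset.mem_range.mpr h)
        omega
      have hsplit : ∑ n ∈ Finset.range L, min 0 (((n : ℝ) + 1) * Q + X - A)
          = ∑ n ∈ Finset.range K, min 0 (((n : ℝ) + 1) * Q + X - A)
            + ∑ n ∈ Finset.Ico K L, min 0 (((n : ℝ) + 1) * Q + X - A) := by
        rw [Finset.range_eq_Ico, Finset.range_eq_Ico]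
        exact (Finset.sum_Ico_consecutive _ (Nat.zero_le K) (le_max_right _ _)).symm
      have htail : ∑ n ∈ Finset.Ico K L, min 0 (((n : ℝ) + 1) * Q + X - A) ≤ 0 :=
        Finset.sum_nonpos fun n _ => min_le_left _ _
      have hbound : ∑ n ∈ Finset.range K, min 0 (((n : ℝ) + 1) * Q + X - A)
          ≤ ∑ n ∈ Finset.range K, (((n : ℝ) + 1) * Q - (A - X)) := by
        apply Finset.sum_le_sum
        intro n _
        calc min 0 (((n : ℝ) + 1) * Q + X - A) ≤ ((n : ℝ) + 1) * Q + X - A :=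
              min_le_right _ _
          _ = ((n : ℝ) + 1) * Q - (A - X) := by ring
      have hg := gauss_sum_neg Q (A - X) K
      have hfinal : (∑' n : ℕ, min 0 (((n : ℝ) + 1) * Q + X - A))
          + ∑' n : ℕ, min 0 ((n : ℝ) * Q + A - X)
          ≤ ((-(K:ℝ))^2 - (-(K:ℝ))) / 2 * Q + (-(K:ℝ)) * (A - X) := by
        rw [hT1, hsplit, ← hg]
        linarith
      have hcast : ((Int.negSucc k : ℤ) : ℝ) = -(K : ℝ) := by
        rw [hK]; push_cast [Int.negSucc_eq]; ring
      simpa [hcast] using hfinal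
end

section
/- Let K be a field that is complete with respect to a nontrivial nonarchimedean absolute value |·|, let q ∈ K* with |q| < 1, and let Θ(x) = ∏_{n>0}(1 − qⁿx) · ∏_{n≥0}(1 − qⁿ/x) for x ∈ K*. Then for x ∈ K*, Θ(x) = 0 if and only if x = qⁿ for some integer n ∈ ℤ. -/
/-- The fundamental theta function `Θ(x) = ∏_{n>0}(1 − qⁿx) · ∏_{n≥0}(1 − qⁿ/x)` on `K*`
relative to `q`. -/
noncomputable def Theta {K : Type*} [NontriviallyNormedField K] (q x : K) : K :=
  (∏' n : ℕ, (1 - q ^ (n + 1) * x)) * ∏' n : ℕ, (1 - q ^ n * x⁻¹)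


open Filter Topology Finset

section Aux

variable {K : Type*} [NontriviallyNormedField K] [IsUltrametricDist K]

/-- Ultrametric bound: a finite product of elements close to 1 is close to 1. -/
lemma norm_prod_sub_one_le {f : ℕ → K} {r : ℝ} (hr0 : 0 ≤ r) (hr1 : r ≤ 1)
    (s : Finset ℕ) (h : ∀ i ∈ s, ‖f i - 1‖ ≤ r) :
    ‖(∏ i ∈ s, f i) - 1‖ ≤ r := by
  induction s using Finset.induction_on with
  | empty => simpa using hr0
  | @insert a s ha ih =>
    have hfa : ‖f a - 1‖ ≤ r := h a (mem_insert_self _ _)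
    have hP : ‖(∏ i ∈ s, f i) - 1‖ ≤ r := ih fun i hi => h i (mem_insert_of_mem hi)
    have hna : ‖f a‖ ≤ 1 := by
      calc ‖f a‖ = ‖(f a - 1) + 1‖ := by ring_nf
        _ ≤ max ‖f a - 1‖ ‖(1 : K)‖ := IsUltrametricDist.norm_add_le_max _ _
        _ ≤ 1 := by rw [norm_one]; exact max_le (hfa.trans hr1) le_rfl
    rw [prod_insert ha]
    have key : f a * ∏ i ∈ s, f i - 1 = f a * ((∏ i ∈ s, f i) - 1) + (f a - 1) := by ring
    rw [key]
    refine (IsUltrametricDist.norm_add_le_max _ _).trans (max_le ?_ hfa)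
    rw [norm_mul]
    calc ‖f a‖ * ‖(∏ i ∈ s, f i) - 1‖ ≤ 1 * r := by
          exact mul_le_mul hna hP (norm_nonneg _) zero_le_one
      _ = r := one_mul r

/-- Zero factor forces the product to be zero. -/
lemma tprod_eq_zero_of_factor_zero {f : ℕ → K} {i₀ : ℕ} (h : f i₀ = 0) :
    ∏' n, f n = 0 := by
  have : HasProd f 0 := by
    have hev : ∀ᶠ s : Finset ℕ in atTop, (∏ i ∈ s, f i) = 0 := by
      filter_upwards [eventually_ge_atTop {i₀}] with s hs
      exact Finset.prod_eq_zero (hs (mem_singleton_self i₀)) h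
    exact Tendsto.congr' (hev.mono fun s hs => hs.symm) tendsto_const_nhds
  exact this.tprod_eq

/-- Terms tending to 1 give multipliability in a complete ultrametric field. -/
lemma multipliable_of_tendsto_one' [CompleteSpace K] {f : ℕ → K}
    (h : Tendsto (fun n => f n - 1) atTop (𝓝 0)) : Multipliable f := by
  have hmet : ∀ δ : ℝ, 0 < δ → ∃ n₀ : ℕ, ∀ n, n₀ ≤ n → ‖f n - 1‖ ≤ δ := by
    intro δ hδ
    obtain ⟨N, hN⟩ := Metric.tendsto_atTop.mp h δ hδ
    exact ⟨N, fun n hn => by simpa [dist_eq_norm] using (hN n hn).le⟩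
  have hc : CauchySeq fun s : Finset ℕ => ∏ i ∈ s, f i := by
    rw [Metric.cauchySeq_iff']
    intro ε hε
    obtain ⟨n₀, hn₀⟩ := hmet 1 one_pos
    set C : ℝ := ‖∏ i ∈ Finset.range n₀, f i‖ with hC
    have hCpos : 0 < C + 1 := by positivity
    set δ : ℝ := min (1/2) (ε / (2 * (C + 1))) with hδdef
    have hδpos : 0 < δ := lt_min (by norm_num) (by positivity)
    have hδ1 : δ ≤ 1 := (min_le_left _ _).trans (by norm_num)
    obtain ⟨n₁', hn₁'⟩ := hmet δ hδpos
    set n₁ : ℕ := max n₀ n₁' with hn₁def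
    refine ⟨Finset.range n₁, fun s hs => ?_⟩
    -- ‖∏_{range n₁} f‖ ≤ C since the extra factors beyond range n₀ have norm ≤ 1
    have hnorm_le_one : ∀ i : ℕ, n₀ ≤ i → ‖f i‖ ≤ 1 := by
      intro i hi
      calc ‖f i‖ = ‖(f i - 1) + 1‖ := by ring_nf
        _ ≤ max ‖f i - 1‖ ‖(1 : K)‖ := IsUltrametricDist.norm_add_le_max _ _
        _ ≤ 1 := by rw [norm_one]; exact max_le (hn₀ i hi) le_rfl
    have hPN : ‖∏ i ∈ Finset.range n₁, f i‖ ≤ C := by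
      have hsub : Finset.range n₀ ⊆ Finset.range n₁ :=
        Finset.range_subset_range.mpr (le_max_left _ _)
      rw [← Finset.prod_sdiff hsub, norm_mul]
      calc ‖∏ i ∈ Finset.range n₁ \ Finset.range n₀, f i‖ * C
            ≤ 1 * C := by
              refine mul_le_mul_of_nonneg_right ?_ (norm_nonneg _)
              rw [norm_prod]
              refine Finset.prod_le_one (fun i _ => norm_nonneg _) fun i hi => ?_
              refine hnorm_le_one i ?_
              rcases Finset.mem_sdiff.mp hi with ⟨-, hnot⟩
              exact le_of_not_gt fun hlt => hnot (Finset.mem_range.mpr hlt)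
        _ = C := one_mul C
    -- main estimate
    have hsplit : (∏ i ∈ s, f i) = (∏ i ∈ s \ Finset.range n₁, f i) * ∏ i ∈ Finset.range n₁, f i := by
      rw [Finset.prod_sdiff hs]
    have htail : ‖(∏ i ∈ s \ Finset.range n₁, f i) - 1‖ ≤ δ := by
      refine norm_prod_sub_one_le hδpos.le hδ1 _ fun i hi => ?_
      have : n₁ ≤ i := by
        rcases Finset.mem_sdiff.mp hi with ⟨-, hnot⟩
        exact le_of_not_gt fun hlt => hnot (Finset.mem_range.mpr hlt)
      exact hn₁' i (le_trans (le_max_right _ _) this)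
    calc dist (∏ i ∈ s, f i) (∏ i ∈ Finset.range n₁, f i)
        = ‖(∏ i ∈ s, f i) - ∏ i ∈ Finset.range n₁, f i‖ := dist_eq_norm _ _
      _ = ‖((∏ i ∈ s \ Finset.range n₁, f i) - 1) * ∏ i ∈ Finset.range n₁, f i‖ := by
          rw [hsplit]; ring_nf
      _ = ‖(∏ i ∈ s \ Finset.range n₁, f i) - 1‖ * ‖∏ i ∈ Finset.range n₁, f i‖ := norm_mul _ _
      _ ≤ δ * C := mul_le_mul htail hPN (norm_nonneg _) hδpos.le
      _ ≤ (ε / (2 * (C + 1))) * (C + 1) := by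
          refine mul_le_mul (min_le_right _ _) (by linarith) (norm_nonneg _) (by positivity)
      _ < ε := by
          rw [div_mul_eq_mul_div, mul_comm]
          rw [div_lt_iff₀ (by positivity)]
          nlinarith
  obtain ⟨a, ha⟩ := cauchySeq_tendsto_of_complete hc
  exact ⟨a, ha⟩

/-- If all factors are nonzero and the terms tend to 1, the product is nonzero. -/
lemma tprod_ne_zero_of_forall_ne_zero [CompleteSpace K] {f : ℕ → K}
    (h : Tendsto (fun n => f n - 1) atTop (𝓝 0)) (hnz : ∀ n, f n ≠ 0) :
    ∏' n, f n ≠ 0 := by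
  obtain ⟨N, hN⟩ := Metric.tendsto_atTop.mp h (1/2) (by norm_num)
  have hN' : ∀ n, N ≤ n → ‖f n - 1‖ ≤ 1/2 := fun n hn => by
    simpa [dist_eq_norm] using (hN n hn).le
  have hmf : Multipliable f := multipliable_of_tendsto_one' h
  set g : ℕ → K := fun n => f (n + N) with hg
  have hg1 : Tendsto (fun n => g n - 1) atTop (𝓝 0) :=
    (h.comp (tendsto_add_atTop_nat N))
  have hmg : Multipliable g := multipliable_of_tendsto_one' hg1
  have hsplit : ((∏ i ∈ Finset.range N, f i) * ∏' i, g i) = ∏' i, f i :=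
    hmg.prod_mul_tprod_nat_mul'
  rw [← hsplit]
  refine mul_ne_zero (Finset.prod_ne_zero_iff.mpr fun i _ => hnz i) ?_
  -- ‖∏' g - 1‖ ≤ 1/2
  have hbound : ‖(∏' i, g i) - 1‖ ≤ 1/2 := by
    have htend : Tendsto (fun s : Finset ℕ => ‖(∏ i ∈ s, g i) - 1‖) atTop
        (𝓝 ‖(∏' i, g i) - 1‖) :=
      ((continuous_norm.comp (continuous_id.sub continuous_const)).continuousAt.tendsto.comp
        hmg.hasProd)
    refine le_of_tendsto' htend fun s => ?_
    exact norm_prod_sub_one_le (by norm_num) (by norm_num) s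
      fun i _ => hN' (i + N) (Nat.le_add_left _ _)
  intro h0
  rw [h0] at hbound
  simp at hbound
  linarith

end Aux

theorem stmt10_aux (K : Type*) [NontriviallyNormedField K] [CompleteSpace K]
    [IsUltrametricDist K] (q : K) (hq0 : q ≠ 0) (hq : ‖q‖ < 1)
    (x : K) (hx : x ≠ 0) :
    (∏' n : ℕ, (1 - q ^ (n + 1) * x)) * (∏' n : ℕ, (1 - q ^ n * x⁻¹)) = 0 ↔ ∃ n : ℤ, x = q ^ n := by
  have hqpow : Tendsto (fun n : ℕ => q ^ n) atTop (𝓝 0) :=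
    tendsto_pow_atTop_nhds_zero_of_norm_lt_one hq
  have hA1 : Tendsto (fun n : ℕ => (1 - q ^ (n + 1) * x) - 1) atTop (𝓝 0) := by
    have : Tendsto (fun n : ℕ => -(q ^ (n + 1) * x)) atTop (𝓝 (-(0 * x))) :=
      (((hqpow.comp (tendsto_add_atTop_nat 1)).mul_const x).neg)
    simpa [sub_sub_cancel_left] using this.congr fun n => by ring
  have hB1 : Tendsto (fun n : ℕ => (1 - q ^ n * x⁻¹) - 1) atTop (𝓝 0) := by
    have : Tendsto (fun n : ℕ => -(q ^ n * x⁻¹)) atTop (𝓝 (-(0 * x⁻¹))) :=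
      ((hqpow.mul_const x⁻¹).neg)
    simpa using this.congr fun n => by ring
  constructor
  · intro h0
    rcases mul_eq_zero.mp h0 with hA | hB
    · -- some factor of A vanishes
      by_contra hcon
      revert hA
      refine tprod_ne_zero_of_forall_ne_zero hA1 fun n hn => ?_
      have hx' : q ^ (n + 1) * x = 1 := by linear_combination -hn
      have : x = (q ^ (n + 1))⁻¹ := eq_inv_of_mul_eq_one_right hx'
      refine hcon ⟨-(n + 1 : ℤ), ?_⟩
      rw [this, zpow_neg]
      norm_cast
    · by_contra hcon
      revert hB
      refine tprod_ne_zero_of_forall_ne_zero hB1 fun n hn => ?_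
      have hx' : q ^ n * x⁻¹ = 1 := by linear_combination -hn
      have : x = q ^ n := by
        field_simp at hx'
        exact hx'.symm
      exact hcon ⟨(n : ℤ), by rw [this, zpow_natCast]⟩
  · rintro ⟨m, rfl⟩
    rcases le_or_gt 0 m with hm | hm
    · -- factor in B vanishes at index m.toNat
      have hfac : (1 : K) - q ^ m.toNat * (q ^ m)⁻¹ = 0 := by
        rw [← zpow_natCast q m.toNat, Int.toNat_of_nonneg hm]
        field_simp
        exact sub_self 1
      have hB0 : (∏' n : ℕ, (1 - q ^ n * (q ^ m)⁻¹)) = 0 :=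
        tprod_eq_zero_of_factor_zero hfac
      rw [hB0, mul_zero]
    · -- factor in A vanishes at index (-m-1).toNat
      set n : ℕ := (-m - 1).toNat with hn
      have hmn : (n : ℤ) = -m - 1 := Int.toNat_of_nonneg (by omega)
      have hfac : (1 : K) - q ^ (n + 1) * q ^ m = 0 := by
        have : (q : K) ^ (n + 1) = q ^ ((n : ℤ) + 1) := by
          rw [← zpow_natCast]; norm_cast
        rw [this, hmn, ← zpow_add₀ hq0]
        simp
      have hA0 : (∏' k : ℕ, (1 - q ^ (k + 1) * q ^ m)) = 0 :=
        tprod_eq_zero_of_factor_zero hfac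
      rw [hA0, zero_mul]

theorem stmt10 (K : Type*) [NontriviallyNormedField K] [CompleteSpace K]
    [IsUltrametricDist K] (q : K) (hq0 : q ≠ 0) (hq : ‖q‖ < 1)
    (x : K) (hx : x ≠ 0) :
    Theta q x = 0 ↔ ∃ n : ℤ, x = q ^ n := by
  rw [Theta]
  exact stmt10_aux K q hq0 hq x hx
end

section
/- Let K be a field complete with respect to a nontrivial nonarchimedean absolute value; write val(x) = −log|x| for x ∈ K*. Let q ∈ K* with Q := val(q) > 0, let Θ(x) = ∏_{n>0}(1 − qⁿx)·∏_{n≥0}(1 − qⁿ/x), and for a ∈ K* set Θ_a(x) = Θ(x/a). Suppose a, x ∈ K* are such that val(a) − val(x) ∉ Q·ℤ. Then val(Θ_a(x)) = min_{m∈ℤ} [ ((m² − m)/2)·Q + m·(val(a) − val(x)) ]. -/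
open Filter Finset Topology


section ultra
variable {K : Type*} [NontriviallyNormedField K] [IsUltrametricDist K]

lemma ultra_norm_le_one_of_sub_one {u : K} {ε : ℝ} (hε1 : ε ≤ 1) (h : ‖u - 1‖ ≤ ε) :
    ‖u‖ ≤ 1 := by
  have hu : u = (u - 1) + 1 := by ring
  rw [hu]
  exact (IsUltrametricDist.norm_add_le_max _ _).trans
    (max_le ((h.trans hε1)) (by simp))

lemma ultra_prod_sub_one {ι : Type*} (s : Finset ι) (f : ι → K) {ε : ℝ} (hε0 : 0 ≤ ε)
    (hε1 : ε ≤ 1) (h : ∀ i ∈ s, ‖f i - 1‖ ≤ ε) : ‖(∏ i ∈ s, f i) - 1‖ ≤ ε := by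
  classical
  induction s using Finset.induction_on with
  | empty => simpa using hε0
  | @insert a s has ih =>
    have hfa : ‖f a - 1‖ ≤ ε := h a (Finset.mem_insert_self _ _)
    have hP : ‖(∏ i ∈ s, f i) - 1‖ ≤ ε := ih fun i hi => h i (Finset.mem_insert_of_mem hi)
    have hna : ‖f a‖ ≤ 1 := ultra_norm_le_one_of_sub_one hε1 hfa
    rw [Finset.prod_insert has]
    have key : f a * (∏ i ∈ s, f i) - 1 = f a * ((∏ i ∈ s, f i) - 1) + (f a - 1) := by ring
    rw [key]
    refine (IsUltrametricDist.norm_add_le_max _ _).trans (max_le ?_ hfa)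
    rw [norm_mul]
    calc ‖f a‖ * ‖(∏ i ∈ s, f i) - 1‖ ≤ 1 * ε :=
          mul_le_mul hna hP (norm_nonneg _) zero_le_one
    _ = ε := one_mul ε

lemma ultra_multipliable [CompleteSpace K] {f : ℕ → K}
    (h : Tendsto f atTop (𝓝 1)) : Multipliable f := by
  classical
  suffices hc : CauchySeq (fun s : Finset ℕ => ∏ i ∈ s, f i) by
    obtain ⟨a, ha⟩ := cauchySeq_tendsto_of_complete hc
    exact ⟨a, ha⟩
  rw [Metric.cauchySeq_iff]
  intro ε hε
  -- first, indices where ‖f i - 1‖ ≤ 1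
  obtain ⟨n₀, hn₀⟩ := (Metric.tendsto_atTop.mp h 1 one_pos)
  set C : ℝ := ‖∏ i ∈ Finset.range n₀, f i‖ with hC
  have hC0 : 0 ≤ C := norm_nonneg _
  have hδ : 0 < min 1 (ε / (C + 1)) := lt_min one_pos (div_pos hε (by linarith))
  obtain ⟨n₁', hn₁'⟩ := (Metric.tendsto_atTop.mp h _ hδ)
  set n₁ : ℕ := max n₀ n₁' with hn₁def
  set N : Finset ℕ := Finset.range n₁ with hNdef
  refine ⟨N, fun s hs t ht => ?_⟩
  set δ : ℝ := min 1 (ε / (C + 1)) with hδdef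
  have hδ1 : δ ≤ 1 := min_le_left _ _
  have hsmall : ∀ i : ℕ, n₁ ≤ i → ‖f i - 1‖ ≤ δ := by
    intro i hi
    have := hn₁' i (le_trans (le_max_right _ _) hi)
    rw [dist_eq_norm] at this
    exact this.le
  have hone : ∀ i : ℕ, n₀ ≤ i → ‖f i - 1‖ ≤ 1 := by
    intro i hi
    have := hn₀ i hi
    rw [dist_eq_norm] at this
    exact this.le
  -- norm of partial product over any u ⊇ N is ≤ C
  have hbound : ∀ u : Finset ℕ, N ⊆ u → ‖∏ i ∈ u, f i‖ ≤ C := by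
    intro u hu
    have hsub : Finset.range n₀ ⊆ u := le_trans (by
      rw [hNdef]; exact Finset.range_subset_range.mpr (le_max_left _ _)) hu
    rw [← Finset.prod_sdiff hsub, norm_mul]
    have h1 : ‖∏ i ∈ u \ Finset.range n₀, f i‖ ≤ 1 := by
      refine ultra_norm_le_one_of_sub_one le_rfl (ultra_prod_sub_one _ _ zero_le_one le_rfl ?_)
      intro i hi
      exact hone i (by simpa using (Finset.mem_sdiff.mp hi).2)
    calc ‖∏ i ∈ u \ Finset.range n₀, f i‖ * C ≤ 1 * C :=
          mul_le_mul_of_nonneg_right h1 hC0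
    _ = C := one_mul C
  -- main estimate
  have key : ∀ u : Finset ℕ, N ⊆ u → ‖(∏ i ∈ u, f i) - ∏ i ∈ N, f i‖ ≤ C * δ := by
    intro u hu
    rw [← Finset.prod_sdiff hu]
    have : (∏ i ∈ u \ N, f i) * (∏ i ∈ N, f i) - ∏ i ∈ N, f i
        = ((∏ i ∈ u \ N, f i) - 1) * ∏ i ∈ N, f i := by ring
    rw [this, norm_mul]
    have h1 : ‖(∏ i ∈ u \ N, f i) - 1‖ ≤ δ := by
      refine ultra_prod_sub_one _ _ hδ.le hδ1 ?_
      intro i hi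
      refine hsmall i ?_
      have := (Finset.mem_sdiff.mp hi).2
      simpa [hNdef] using this
    have h2 : ‖∏ i ∈ N, f i‖ ≤ C := hbound N le_rfl
    calc ‖(∏ i ∈ u \ N, f i) - 1‖ * ‖∏ i ∈ N, f i‖ ≤ δ * C :=
      mul_le_mul h1 h2 (norm_nonneg _) hδ.le
    _ = C * δ := mul_comm _ _
  have h1 := key s hs
  have h2 := key t ht
  have htri := IsUltrametricDist.dist_triangle_max (∏ i ∈ s, f i) (∏ i ∈ N, f i) (∏ i ∈ t, f i)
  have hCδ : C * δ < ε := by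
    have hle : δ ≤ ε / (C + 1) := min_le_right _ _
    have h3 : C / (C + 1) < 1 := by
      rw [div_lt_one (by linarith)]; linarith
    calc C * δ ≤ C * (ε / (C + 1)) := mul_le_mul_of_nonneg_left hle hC0
    _ = ε * (C / (C + 1)) := by ring
    _ < ε * 1 := by exact mul_lt_mul_of_pos_left h3 hε
    _ = ε := mul_one ε
  refine lt_of_le_of_lt htri (max_lt ?_ ?_)
  · rw [dist_eq_norm]; exact lt_of_le_of_lt h1 hCδ
  · rw [dist_comm, dist_eq_norm]; exact lt_of_le_of_lt h2 hCδ

end ultra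

section aux2
variable {K : Type*} [NontriviallyNormedField K] [IsUltrametricDist K]




lemma ultra_norm_tprod {f : ℕ → K} (hf : Multipliable f) : ‖∏' i, f i‖ = ∏' i, ‖f i‖ := by
  have := (hf.hasProd.map (normHom : K →*₀ ℝ) continuous_norm).tprod_eq
  simpa [Function.comp] using this.symm

lemma ultra_norm_one_sub {u : K} (h : ‖u‖ ≠ 1) : ‖1 - u‖ = max 1 ‖u‖ := by
  have h' : ‖(1:K)‖ ≠ ‖-u‖ := by simpa using fun e => h e.symm
  have := IsUltrametricDist.norm_add_eq_max_of_norm_ne_norm h'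
  simpa [sub_eq_add_neg] using this

example {f : ℕ → ℝ} (N : ℕ) (h : ∀ n, N ≤ n → f n = 1) (hP : HasProd f (∏' i, f i)) :
    ∏' i, f i = ∏ i ∈ Finset.range N, f i := by
  refine hP.unique (hasProd_prod_of_ne_finset_one (s := Finset.range N) ?_)
  intro n hn
  exact h n (by simpa using hn)

end aux2


lemma sum_range_lin (Q T : ℝ) (k : ℕ) :
    ∑ n ∈ Finset.range k, ((n : ℝ) * Q + T) = (((k:ℝ)^2 - k)/2) * Q + k * T := by
  induction k with
  | zero => simp
  | succ k ih => rw [Finset.sum_range_succ, ih]; push_cast; ring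

lemma sum_range_lin' (Q T : ℝ) (k : ℕ) :
    ∑ n ∈ Finset.range k, (((n : ℝ)+1) * Q - T) = (((k:ℝ)^2 + k)/2) * Q - k * T := by
  induction k with
  | zero => simp
  | succ k ih => rw [Finset.sum_range_succ, ih]; push_cast; ring

lemma tropical_main (Q T : ℝ) (hQ : 0 < Q) (hnc : ∀ i : ℤ, T ≠ (i:ℝ) * Q) (N : ℕ)
    (hN1 : ∀ n : ℕ, N ≤ n → 0 < ((n:ℝ)+1) * Q - T)
    (hN2 : ∀ n : ℕ, N ≤ n → 0 < (n:ℝ) * Q + T) :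
    IsLeast (Set.range fun m : ℤ => (((m:ℝ)^2 - (m:ℝ))/2) * Q + (m:ℝ) * T)
      ((∑ n ∈ Finset.range N, min 0 (((n:ℝ)+1)*Q - T)) +
       ∑ n ∈ Finset.range N, min 0 ((n:ℝ)*Q + T)) := by
  set m₀ : ℤ := ⌈-T/Q⌉ with hm₀
  have hne : -T/Q ≠ (m₀ : ℝ) := by
    intro e
    have : T = ((-m₀ : ℤ) : ℝ) * Q := by
      push_cast
      field_simp at e
      linarith
    exact hnc (-m₀) this
  have hu : -T/Q < (m₀ : ℝ) := lt_of_le_of_ne (Int.le_ceil _) hne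
  have hl : (m₀ : ℝ) - 1 < -T/Q := by
    have := Int.ceil_lt_add_one (-T/Q)
    rw [← hm₀] at this
    linarith
  have hu' : 0 < (m₀:ℝ) * Q + T := by
    have := (div_lt_iff₀ hQ).mp hu
    linarith
  have hl' : ((m₀:ℝ) - 1) * Q + T < 0 := by
    have := (lt_div_iff₀ hQ).mp hl
    linarith
  -- the minimum value
  have hmin : ∀ m : ℤ, (((m₀:ℝ)^2 - (m₀:ℝ))/2) * Q + (m₀:ℝ) * T
      ≤ (((m:ℝ)^2 - (m:ℝ))/2) * Q + (m:ℝ) * T := by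
    intro m
    rcases lt_trichotomy m m₀ with hlt | heq | hgt
    · have hd : (m:ℝ) ≤ (m₀:ℝ) - 1 := by
        have : m ≤ m₀ - 1 := by omega
        exact_mod_cast this
      have h1 : (0:ℝ) ≤ ((m₀:ℝ) - m - 1) * ((m₀:ℝ) - m) :=
        mul_nonneg (by linarith) (by linarith)
      have h2 : (0:ℝ) ≤ ((m₀:ℝ) - m) * (-(((m₀:ℝ) - 1) * Q + T)) :=
        mul_nonneg (by linarith) (by linarith)
      nlinarith [mul_nonneg h1 hQ.le]
    · rw [heq]
    · have hd : (m₀:ℝ) + 1 ≤ (m:ℝ) := by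
        have : m₀ + 1 ≤ m := by omega
        exact_mod_cast this
      have h1 : (0:ℝ) ≤ ((m:ℝ) - m₀ - 1) * ((m:ℝ) - m₀) :=
        mul_nonneg (by linarith) (by linarith)
      have h2 : (0:ℝ) ≤ ((m:ℝ) - m₀) * ((m₀:ℝ) * Q + T) :=
        mul_nonneg (by linarith) (by linarith)
      nlinarith [mul_nonneg h1 hQ.le]
  -- compute the sum
  have hsum : (∑ n ∈ Finset.range N, min 0 (((n:ℝ)+1)*Q - T)) +
      (∑ n ∈ Finset.range N, min 0 ((n:ℝ)*Q + T))
      = (((m₀:ℝ)^2 - (m₀:ℝ))/2) * Q + (m₀:ℝ) * T := by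
    rcases le_total 0 m₀ with hpos | hneg
    · -- m₀ ≥ 0 : first sum vanishes
      set k : ℕ := m₀.toNat with hk
      have hkm : (k : ℝ) = (m₀ : ℝ) := by
        rw [hk]; exact_mod_cast Int.toNat_of_nonneg hpos
      have hS1 : ∑ n ∈ Finset.range N, min 0 (((n:ℝ)+1)*Q - T) = 0 := by
        refine Finset.sum_eq_zero fun n _ => ?_
        refine min_eq_left ?_
        have hTQ : T < Q := by nlinarith [hpos]
        have : (1:ℝ) ≤ (n:ℝ) + 1 := by have := Nat.cast_nonneg (α := ℝ) n; linarith
        nlinarith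
      have hkN : k ≤ N := by
        have h0 : 0 < (N:ℝ) * Q + T := hN2 N le_rfl
        have : (m₀:ℝ) - 1 < (N:ℝ) := by
          rw [sub_lt_iff_lt_add]
          nlinarith [hl']
        have : m₀ - 1 < (N:ℤ) := by exact_mod_cast this
        omega
      have hS2 : ∑ n ∈ Finset.range N, min 0 ((n:ℝ)*Q + T)
          = ∑ n ∈ Finset.range k, ((n:ℝ)*Q + T) := by
        rw [← Finset.sum_subset (Finset.range_subset_range.mpr hkN)
          (fun n _ hn => ?_)]
        · refine Finset.sum_congr rfl fun n hn => ?_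
          refine min_eq_right ?_
          have hn' : (n:ℝ) ≤ (m₀:ℝ) - 1 := by
            have : (n:ℤ) ≤ m₀ - 1 := by
              have := Finset.mem_range.mp hn
              omega
            exact_mod_cast this
          nlinarith
        · refine min_eq_left ?_
          have hn' : (m₀:ℝ) ≤ (n:ℝ) := by
            have := Finset.mem_range.mp ‹n ∈ Finset.range N›
            have h2 : m₀ ≤ (n:ℤ) := by
              have := Finset.mem_range.not.mp hn
              omega
            exact_mod_cast h2
          nlinarith
      rw [hS1, hS2, sum_range_lin, hkm]
      ring
    · -- m₀ ≤ 0 : second sum vanishes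
      set k : ℕ := (-m₀).toNat with hk
      have hkm : (k : ℝ) = -(m₀ : ℝ) := by
        rw [hk]
        exact_mod_cast Int.toNat_of_nonneg (by omega : 0 ≤ -m₀)
      have hS2 : ∑ n ∈ Finset.range N, min 0 ((n:ℝ)*Q + T) = 0 := by
        refine Finset.sum_eq_zero fun n _ => ?_
        refine min_eq_left ?_
        have hT : 0 < T := by nlinarith [hneg]
        have : (0:ℝ) ≤ (n:ℝ) := Nat.cast_nonneg n
        nlinarith
      have hkN : k ≤ N := by
        have h0 : 0 < ((N:ℝ)+1) * Q - T := hN1 N le_rfl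
        have : -(m₀:ℝ) < (N:ℝ) + 1 := by nlinarith [hu']
        have : -m₀ < (N:ℤ) + 1 := by exact_mod_cast this
        omega
      have hS1 : ∑ n ∈ Finset.range N, min 0 (((n:ℝ)+1)*Q - T)
          = ∑ n ∈ Finset.range k, (((n:ℝ)+1)*Q - T) := by
        rw [← Finset.sum_subset (Finset.range_subset_range.mpr hkN)
          (fun n _ hn => ?_)]
        · refine Finset.sum_congr rfl fun n hn => ?_
          refine min_eq_right ?_
          have hn' : (n:ℝ) + 1 ≤ -(m₀:ℝ) := by
            have : (n:ℤ) + 1 ≤ -m₀ := by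
              have := Finset.mem_range.mp hn
              omega
            exact_mod_cast this
          nlinarith
        · refine min_eq_left ?_
          have hn' : -(m₀:ℝ) + 1 ≤ (n:ℝ) + 1 := by
            have h2 : -m₀ ≤ (n:ℤ) := by
              have := Finset.mem_range.not.mp hn
              omega
            have : -(m₀:ℝ) ≤ (n:ℝ) := by exact_mod_cast h2
            linarith
          nlinarith
      rw [hS2, hS1, sum_range_lin', hkm]
      ring
  rw [hsum]
  exact ⟨⟨m₀, rfl⟩, by rintro p ⟨m, rfl⟩; exact hmin m⟩


lemma neg_log_max (z : ℝ) (hz : 0 < z) : -Real.log (max 1 z) = min 0 (-Real.log z) := by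
  rcases le_total z 1 with h | h
  · rw [max_eq_left h, Real.log_one, neg_zero, min_eq_left]
    have : Real.log z ≤ 0 := Real.log_nonpos hz.le h
    linarith
  · rw [max_eq_right h, min_eq_right]
    have : 0 ≤ Real.log z := Real.log_nonneg h
    linarith



/-- The additive valuation `val(x) = −log |x|` attached to the absolute value of `K`. -/
noncomputable def nval {K : Type*} [NontriviallyNormedField K] (x : K) : ℝ :=
  -Real.log ‖x‖

theorem stmt11 (K : Type*) [NontriviallyNormedField K] [CompleteSpace K]
    [IsUltrametricDist K] (q : K) (hq0 : q ≠ 0) (hQ : 0 < nval q)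
    (a x : K) (ha : a ≠ 0) (hx : x ≠ 0)
    (hnc : ∀ i : ℤ, nval a - nval x ≠ (i : ℝ) * nval q) :
    IsLeast
      (Set.range fun m : ℤ =>
        (((m : ℝ)^2 - (m : ℝ)) / 2) * nval q + (m : ℝ) * (nval a - nval x))
      (nval (Theta q (x / a))) := by
  classical
  set Q : ℝ := nval q with hQdef
  set T : ℝ := nval a - nval x with hTdef
  set y : K := x / a with hydef
  have hy : y ≠ 0 := div_ne_zero hx ha
  have hqn : (0:ℝ) < ‖q‖ := norm_pos_iff.mpr hq0
  have hyn : (0:ℝ) < ‖y‖ := norm_pos_iff.mpr hy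
  have hlogq : Real.log ‖q‖ = -Q := by
    rw [hQdef]; simp [nval]
  have hq1 : ‖q‖ < 1 := by
    have hneg : Real.log ‖q‖ < 0 := by rw [hlogq]; linarith
    exact (Real.log_neg_iff hqn).mp hneg
  have hlogy : Real.log ‖y‖ = T := by
    rw [hydef, hTdef, norm_div,
      Real.log_div (norm_ne_zero_iff.mpr hx) (norm_ne_zero_iff.mpr ha)]
    simp [nval]
    ring
  -- the norm sequences
  set r₁ : ℕ → ℝ := fun n => ‖q‖ ^ (n + 1) * ‖y‖ with hr₁def
  set r₂ : ℕ → ℝ := fun n => ‖q‖ ^ n * ‖y‖⁻¹ with hr₂def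
  have hr₁pos : ∀ n, 0 < r₁ n := fun n => by positivity
  have hr₂pos : ∀ n, 0 < r₂ n := fun n => by positivity
  have L1 : ∀ n : ℕ, -Real.log (r₁ n) = ((n:ℝ)+1) * Q - T := by
    intro n
    rw [hr₁def]
    rw [Real.log_mul (by positivity) hyn.ne', Real.log_pow, hlogq, hlogy]
    push_cast
    ring
  have L2 : ∀ n : ℕ, -Real.log (r₂ n) = (n:ℝ) * Q + T := by
    intro n
    rw [hr₂def]
    rw [Real.log_mul (by positivity) (by positivity), Real.log_pow, Real.log_inv, hlogq, hlogy]
    push_cast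
    ring
  have hne1 : ∀ n : ℕ, r₁ n ≠ 1 := by
    intro n he
    have : -Real.log (r₁ n) = 0 := by rw [he]; simp
    rw [L1 n] at this
    refine hnc ((n:ℤ)+1) ?_
    push_cast
    linarith
  have hne2 : ∀ n : ℕ, r₂ n ≠ 1 := by
    intro n he
    have : -Real.log (r₂ n) = 0 := by rw [he]; simp
    rw [L2 n] at this
    refine hnc (-(n:ℤ)) ?_
    push_cast
    linarith
  -- the factors
  have hnorm1 : ∀ n : ℕ, ‖(1 : K) - q ^ (n+1) * y‖ = max 1 (r₁ n) := by
    intro n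
    have h : ‖q ^ (n+1) * y‖ = r₁ n := by rw [norm_mul, norm_pow]
    rw [ultra_norm_one_sub (by rw [h]; exact hne1 n), h]
  have hnorm2 : ∀ n : ℕ, ‖(1 : K) - q ^ n * y⁻¹‖ = max 1 (r₂ n) := by
    intro n
    have h : ‖q ^ n * y⁻¹‖ = r₂ n := by rw [norm_mul, norm_pow, norm_inv]
    rw [ultra_norm_one_sub (by rw [h]; exact hne2 n), h]
  -- multipliability
  have ht₁ : Tendsto (fun n : ℕ => q ^ (n+1) * y) atTop (𝓝 0) := by
    have := (tendsto_pow_atTop_nhds_zero_of_norm_lt_one hq1).mul_const (q * y)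
    simp only [zero_mul] at this
    refine this.congr fun n => ?_
    rw [pow_succ]
    ring
  have ht₂ : Tendsto (fun n : ℕ => q ^ n * y⁻¹) atTop (𝓝 0) := by
    have := (tendsto_pow_atTop_nhds_zero_of_norm_lt_one hq1).mul_const y⁻¹
    simpa using this
  have hm₁ : Multipliable fun n : ℕ => (1:K) - q ^ (n+1) * y := by
    refine ultra_multipliable ?_
    have := ht₁.const_sub (1:K)
    simpa using this
  have hm₂ : Multipliable fun n : ℕ => (1:K) - q ^ n * y⁻¹ := by
    refine ultra_multipliable ?_
    have := ht₂.const_sub (1:K)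
    simpa using this
  -- choose N
  have hrt₁ : Tendsto r₁ atTop (𝓝 0) := by
    have h := ht₁.norm
    simp only [norm_zero] at h
    refine h.congr fun n => ?_
    rw [norm_mul, norm_pow]
  have hrt₂ : Tendsto r₂ atTop (𝓝 0) := by
    have h := ht₂.norm
    simp only [norm_zero] at h
    refine h.congr fun n => ?_
    rw [norm_mul, norm_pow, norm_inv]
  obtain ⟨N, hN⟩ := (eventually_atTop).mp
    ((hrt₁.eventually_lt_const one_pos).and (hrt₂.eventually_lt_const one_pos))
  have hN1 : ∀ n : ℕ, N ≤ n → 0 < ((n:ℝ)+1) * Q - T := by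
    intro n hn
    have := Real.log_neg (hr₁pos n) (hN n hn).1
    rw [← L1 n]; linarith
  have hN2 : ∀ n : ℕ, N ≤ n → 0 < (n:ℝ) * Q + T := by
    intro n hn
    have := Real.log_neg (hr₂pos n) (hN n hn).2
    rw [← L2 n]; linarith
  -- compute norms of the two products
  have hp₁ : ‖∏' n : ℕ, ((1:K) - q ^ (n+1) * y)‖ = ∏ n ∈ Finset.range N, max 1 (r₁ n) := by
    rw [ultra_norm_tprod hm₁]
    have hfin : HasProd (fun n : ℕ => ‖(1:K) - q ^ (n+1) * y‖)
        (∏ n ∈ Finset.range N, ‖(1:K) - q ^ (n+1) * y‖) := by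
      refine hasProd_prod_of_ne_finset_one fun n hn => ?_
      rw [hnorm1 n]
      exact max_eq_left (le_of_lt (hN n (by simpa using hn)).1)
    rw [hfin.tprod_eq]
    exact Finset.prod_congr rfl fun n _ => hnorm1 n
  have hp₂ : ‖∏' n : ℕ, ((1:K) - q ^ n * y⁻¹)‖ = ∏ n ∈ Finset.range N, max 1 (r₂ n) := by
    rw [ultra_norm_tprod hm₂]
    have hfin : HasProd (fun n : ℕ => ‖(1:K) - q ^ n * y⁻¹‖)
        (∏ n ∈ Finset.range N, ‖(1:K) - q ^ n * y⁻¹‖) := by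
      refine hasProd_prod_of_ne_finset_one fun n hn => ?_
      rw [hnorm2 n]
      exact max_eq_left (le_of_lt (hN n (by simpa using hn)).2)
    rw [hfin.tprod_eq]
    exact Finset.prod_congr rfl fun n _ => hnorm2 n
  have hpr₁pos : (0:ℝ) < ∏ n ∈ Finset.range N, max 1 (r₁ n) :=
    Finset.prod_pos fun n _ => lt_of_lt_of_le one_pos (le_max_left _ _)
  have hpr₂pos : (0:ℝ) < ∏ n ∈ Finset.range N, max 1 (r₂ n) :=
    Finset.prod_pos fun n _ => lt_of_lt_of_le one_pos (le_max_left _ _)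
  -- nval of Theta
  have hval : nval (Theta q y) =
      (∑ n ∈ Finset.range N, min 0 (((n:ℝ)+1)*Q - T)) +
      ∑ n ∈ Finset.range N, min 0 ((n:ℝ)*Q + T) := by
    rw [Theta, nval, norm_mul, hp₁, hp₂,
      Real.log_mul hpr₁pos.ne' hpr₂pos.ne',
      Real.log_prod (fun n _ => (lt_of_lt_of_le one_pos (le_max_left _ _)).ne'),
      Real.log_prod (fun n _ => (lt_of_lt_of_le one_pos (le_max_left _ _)).ne')]
    rw [neg_add, ← Finset.sum_neg_distrib, ← Finset.sum_neg_distrib]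
    congr 1
    · exact Finset.sum_congr rfl fun n _ => by rw [neg_log_max _ (hr₁pos n), L1 n]
    · exact Finset.sum_congr rfl fun n _ => by rw [neg_log_max _ (hr₂pos n), L2 n]
  rw [hval]
  exact tropical_main Q T hQ hnc N hN1 hN2
end

section
/- Let K be a field complete with respect to a nontrivial nonarchimedean absolute value; write val(x) = −log|x| for x ∈ K*. Let q ∈ K* with Q := val(q) > 0, let Θ(x) = ∏_{n>0}(1 − qⁿx)·∏_{n≥0}(1 − qⁿ/x), and for a ∈ K* set Θ_a(x) = Θ(x/a). Suppose a, x ∈ K* satisfy val(a) − val(x) = i·Q for some integer i, and suppose x ∉ a·q^ℤ. Then val(Θ_a(x)) = min_{m∈ℤ} [ ((m² − m)/2)·Q + m·(val(a) − val(x)) ] + val(1 − (x/a)·qⁱ). -/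
set_option linter.unusedSectionVars false
set_option linter.unusedVariables false

open Filter Topology IsUltrametricDist

section helpers
variable {K : Type*} [NontriviallyNormedField K] [IsUltrametricDist K]

lemma my_prod_sub_one_norm_le {δ : ℝ} (hδ0 : 0 ≤ δ) (hδ : δ ≤ 1) (s : Finset ℕ) (g : ℕ → K)
    (h : ∀ n ∈ s, ‖g n - 1‖ ≤ δ) : ‖(∏ n ∈ s, g n) - 1‖ ≤ δ := by
  classical
  induction s using Finset.induction with
  | empty => simpa using hδ0
  | insert _ _ hns ih =>
    rename_i b s2
    rw [Finset.prod_insert hns]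
    have hb : ‖g b - 1‖ ≤ δ := h b (Finset.mem_insert_self _ _)
    have hP : ‖(∏ n ∈ s2, g n) - 1‖ ≤ δ := ih fun n hn => h n (Finset.mem_insert_of_mem hn)
    have hgb : ‖g b‖ ≤ 1 := by
      calc ‖g b‖ = ‖(g b - 1) + 1‖ := by ring_nf
        _ ≤ max ‖g b - 1‖ ‖(1:K)‖ := norm_add_le_max _ _
        _ ≤ 1 := by rw [norm_one]; exact max_le (hb.trans hδ) le_rfl
    calc ‖g b * ∏ n ∈ s2, g n - 1‖ = ‖g b * ((∏ n ∈ s2, g n) - 1) + (g b - 1)‖ := by ring_nf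
      _ ≤ max ‖g b * ((∏ n ∈ s2, g n) - 1)‖ ‖g b - 1‖ := norm_add_le_max _ _
      _ ≤ δ := by
          refine max_le ?_ hb
          rw [norm_mul]
          calc ‖g b‖ * ‖(∏ n ∈ s2, g n) - 1‖ ≤ 1 * δ :=
            mul_le_mul hgb hP (norm_nonneg _) zero_le_one
          _ = δ := one_mul δ

lemma my_prod_norm_le_one (s : Finset ℕ) (g : ℕ → K)
    (h : ∀ n ∈ s, ‖g n - 1‖ ≤ 1) : ‖∏ n ∈ s, g n‖ ≤ 1 := by
  have := my_prod_sub_one_norm_le zero_le_one le_rfl s g h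
  calc ‖∏ n ∈ s, g n‖ = ‖((∏ n ∈ s, g n) - 1) + 1‖ := by ring_nf
    _ ≤ max ‖(∏ n ∈ s, g n) - 1‖ ‖(1:K)‖ := norm_add_le_max _ _
    _ ≤ 1 := by rw [norm_one]; exact max_le this le_rfl

lemma my_multipliable [CompleteSpace K] (u : ℕ → K)
    (hu : Tendsto u atTop (nhds 0)) : Multipliable (fun n => 1 - u n) := by
  have hnorm : ∀ n, ‖(1:K) - u n - 1‖ = ‖u n‖ := fun n => by
    rw [show (1:K) - u n - 1 = -(u n) by ring, norm_neg]
  obtain ⟨M₀, hM₀⟩ := Metric.tendsto_atTop.1 hu 1 one_pos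
  have hM₀' : ∀ n, M₀ ≤ n → ‖u n‖ ≤ 1 := fun n hn => by
    have := hM₀ n hn; rw [dist_zero_right] at this; exact this.le
  set C : ℝ := max 1 ‖∏ n ∈ Finset.range M₀, (1 - u n)‖ with hCdef
  have hC1 : (1:ℝ) ≤ C := le_max_left _ _
  have hCpos : (0:ℝ) < C := lt_of_lt_of_le one_pos hC1
  have hcauchy : CauchySeq (fun s : Finset ℕ => ∏ n ∈ s, (1 - u n)) := by
    rw [Metric.cauchySeq_iff']
    intro ε hε
    set δ : ℝ := min 1 (ε / (2 * C)) with hδdef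
    have hδpos : 0 < δ := lt_min one_pos (by positivity)
    have hδ1 : δ ≤ 1 := min_le_left _ _
    obtain ⟨M', hM'⟩ := Metric.tendsto_atTop.1 hu δ hδpos
    set M : ℕ := max M' M₀ with hMdef
    refine ⟨Finset.range M, fun s hs => ?_⟩
    have hsub : Finset.range M ⊆ s := hs
    have hPN : ‖∏ n ∈ Finset.range M, (1 - u n)‖ ≤ C := by
      have hsub0 : Finset.range M₀ ⊆ Finset.range M :=
        Finset.range_subset_range.2 (le_max_right _ _)
      rw [← Finset.prod_sdiff hsub0, norm_mul]
      have htail : ‖∏ n ∈ Finset.range M \ Finset.range M₀, (1 - u n)‖ ≤ 1 := by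
        refine my_prod_norm_le_one _ _ fun n hn => ?_
        rcases Finset.mem_sdiff.1 hn with ⟨-, hn2⟩
        rw [hnorm n]
        exact hM₀' n (by simpa using Finset.mem_range.not.1 hn2)
      calc ‖∏ n ∈ Finset.range M \ Finset.range M₀, (1 - u n)‖ * ‖∏ n ∈ Finset.range M₀, (1 - u n)‖
          ≤ 1 * ‖∏ n ∈ Finset.range M₀, (1 - u n)‖ :=
            mul_le_mul_of_nonneg_right htail (norm_nonneg _)
        _ = ‖∏ n ∈ Finset.range M₀, (1 - u n)‖ := one_mul _
        _ ≤ C := le_max_right _ _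
    have key : ‖(∏ n ∈ s \ Finset.range M, (1 - u n)) - 1‖ ≤ δ := by
      refine my_prod_sub_one_norm_le hδpos.le hδ1 _ _ fun n hn => ?_
      rcases Finset.mem_sdiff.1 hn with ⟨-, hn2⟩
      have hnM : M ≤ n := by simpa using Finset.mem_range.not.1 hn2
      have := hM' n (le_trans (le_max_left _ _) hnM)
      rw [dist_zero_right] at this
      rw [hnorm n]; exact this.le
    have hprod : (∏ n ∈ s \ Finset.range M, (1 - u n)) * (∏ n ∈ Finset.range M, (1 - u n))
        = ∏ n ∈ s, (1 - u n) := Finset.prod_sdiff hsub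
    rw [dist_eq_norm, ← hprod]
    have heq : ‖(∏ n ∈ s \ Finset.range M, (1 - u n)) * (∏ n ∈ Finset.range M, (1 - u n))
        - (∏ n ∈ Finset.range M, (1 - u n))‖
        = ‖(∏ n ∈ s \ Finset.range M, (1 - u n)) - 1‖ * ‖∏ n ∈ Finset.range M, (1 - u n)‖ := by
      rw [← norm_mul]; congr 1; ring
    rw [heq]
    have h1 : ‖(∏ n ∈ s \ Finset.range M, (1 - u n)) - 1‖ * ‖∏ n ∈ Finset.range M, (1 - u n)‖
        ≤ δ * C := mul_le_mul key hPN (norm_nonneg _) hδpos.le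
    have h2 : δ * C ≤ (ε / (2 * C)) * C :=
      mul_le_mul_of_nonneg_right (min_le_right _ _) hCpos.le
    have h3 : (ε / (2 * C)) * C = ε / 2 := by field_simp
    calc _ ≤ δ * C := h1
      _ ≤ ε / 2 := by rw [← h3]; exact h2
      _ < ε := by linarith
  obtain ⟨b, hb⟩ := cauchySeq_tendsto_of_complete hcauchy
  exact ⟨b, hb⟩

lemma my_nval_mul {u v : K} (hu : u ≠ 0) (hv : v ≠ 0) : nval (u * v) = nval u + nval v := by
  unfold nval
  rw [norm_mul, Real.log_mul (norm_ne_zero_iff.2 hu) (norm_ne_zero_iff.2 hv)]; ring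

lemma my_nval_inv (u : K) : nval u⁻¹ = -nval u := by
  unfold nval; rw [norm_inv, Real.log_inv]

lemma my_nval_neg (u : K) : nval (-u) = nval u := by unfold nval; rw [norm_neg]

lemma my_nval_pow (u : K) (n : ℕ) : nval (u ^ n) = n * nval u := by
  unfold nval; rw [norm_pow, Real.log_pow]; ring

lemma my_nval_zpow (u : K) (hu : u ≠ 0) (m : ℤ) : nval (u ^ m) = m * nval u := by
  unfold nval; rw [norm_zpow, Real.log_zpow]; ring

lemma my_norm_lt_one {u : K} (hu : u ≠ 0) (h : 0 < nval u) : ‖u‖ < 1 := by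
  have h2 : Real.log ‖u‖ < 0 := by unfold nval at h; linarith
  exact (Real.log_neg_iff (norm_pos_iff.2 hu)).1 h2

lemma my_norm_gt_one {u : K} (hu : u ≠ 0) (h : nval u < 0) : 1 < ‖u‖ := by
  have h2 : 0 < Real.log ‖u‖ := by unfold nval at h; linarith
  exact (Real.log_pos_iff (norm_nonneg _)).1 h2

lemma my_norm_one_sub_of_lt {u : K} (h : ‖u‖ < 1) : ‖1 - u‖ = 1 := by
  have : ‖(1:K) - u‖ = max ‖(1:K)‖ ‖-u‖ := by
    rw [sub_eq_add_neg]
    exact norm_add_eq_max_of_norm_ne_norm (by rw [norm_one, norm_neg]; exact h.ne')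
  rw [this, norm_one, norm_neg, max_eq_left h.le]

lemma my_norm_one_sub_of_gt {u : K} (h : 1 < ‖u‖) : ‖1 - u‖ = ‖u‖ := by
  have : ‖(1:K) - u‖ = max ‖(1:K)‖ ‖-u‖ := by
    rw [sub_eq_add_neg]
    exact norm_add_eq_max_of_norm_ne_norm (by rw [norm_one, norm_neg]; exact h.ne)
  rw [this, norm_one, norm_neg, max_eq_right h.le]

lemma my_nval_one_sub_of_pos {u : K} (hu : u ≠ 0) (h : 0 < nval u) : nval (1 - u) = 0 := by
  unfold nval; rw [my_norm_one_sub_of_lt (my_norm_lt_one hu h), Real.log_one]; ring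

lemma my_nval_one_sub_of_neg {u : K} (hu : u ≠ 0) (h : nval u < 0) : nval (1 - u) = nval u := by
  unfold nval; rw [my_norm_one_sub_of_gt (my_norm_gt_one hu h)]

lemma my_norm_tprod [CompleteSpace K] (u : ℕ → K) (hu : Tendsto u atTop (nhds 0))
    (s : Finset ℕ) (hs : ∀ n ∉ s, ‖u n‖ < 1) :
    ‖∏' n, (1 - u n)‖ = ∏ n ∈ s, ‖1 - u n‖ := by
  have hm := my_multipliable u hu
  have h2 : HasProd (fun n => ‖1 - u n‖) ‖∏' n, (1 - u n)‖ := by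
    have := hm.hasProd.map ((normHom : K →*₀ ℝ).toMonoidHom) continuous_norm
    exact this
  rw [← h2.tprod_eq]
  exact tprod_eq_prod fun n hn => my_norm_one_sub_of_lt (hs n hn)

lemma my_nval_tprod [CompleteSpace K] (u : ℕ → K) (hu : Tendsto u atTop (nhds 0))
    (s : Finset ℕ) (hs : ∀ n ∉ s, ‖u n‖ < 1) (hs' : ∀ n ∈ s, 1 - u n ≠ 0) :
    nval (∏' n, (1 - u n)) = ∑ n ∈ s, nval (1 - u n) := by
  unfold nval
  rw [my_norm_tprod u hu s hs,
    Real.log_prod (fun n hn => norm_ne_zero_iff.2 (hs' n hn)), ← Finset.sum_neg_distrib]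

lemma my_tprod_pos [CompleteSpace K] (u : ℕ → K) (hu : Tendsto u atTop (nhds 0))
    (s : Finset ℕ) (hs : ∀ n ∉ s, ‖u n‖ < 1) (hs' : ∀ n ∈ s, 1 - u n ≠ 0) :
    0 < ‖∏' n, (1 - u n)‖ := by
  rw [my_norm_tprod u hu s hs]
  exact Finset.prod_pos fun n hn => norm_pos_iff.2 (hs' n hn)

lemma my_sum_range_cast (k : ℕ) : ∑ n ∈ Finset.range k, (n:ℝ) = k * (k - 1) / 2 := by
  induction k with
  | zero => simp
  | succ m ih => rw [Finset.sum_range_succ, ih]; push_cast; ring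

lemma my_int_sq (k : ℤ) : 0 ≤ (k:ℝ)^2 - (k:ℝ) := by
  rcases le_or_gt k 0 with h | h
  · have : (k:ℝ) ≤ 0 := by exact_mod_cast h
    nlinarith
  · have : (1:ℝ) ≤ (k:ℝ) := by exact_mod_cast h
    nlinarith

end helpers

theorem stmt12 (K : Type*) [NontriviallyNormedField K] [CompleteSpace K]
    [IsUltrametricDist K] (q : K) (hq0 : q ≠ 0) (hQ : 0 < nval q)
    (a x : K) (ha : a ≠ 0) (hx : x ≠ 0)
    (hxa : ∀ m : ℤ, x ≠ a * q ^ m)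
    (i : ℤ) (hi : nval a - nval x = (i : ℝ) * nval q) :
    ∃ t : ℝ,
      IsLeast
        (Set.range fun m : ℤ =>
          (((m : ℝ)^2 - (m : ℝ)) / 2) * nval q + (m : ℝ) * (nval a - nval x)) t ∧
      nval (Theta q (x / a)) = t + nval (1 - (x / a) * q ^ i) := by
  classical
  set Q : ℝ := nval q with hQdef
  set y : K := x / a with hydef
  have hy0 : y ≠ 0 := div_ne_zero hx ha
  have hnvy : nval y = -(i:ℝ) * Q := by
    have h1 : nval y = nval x + nval a⁻¹ := by
      rw [hydef, div_eq_mul_inv]; exact my_nval_mul hx (inv_ne_zero ha)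
    rw [h1, my_nval_inv]; linarith [hi]
  set u1 : ℕ → K := fun n => q ^ (n + 1) * y with hu1def
  set u2 : ℕ → K := fun n => q ^ n * y⁻¹ with hu2def
  have hu1ne : ∀ n, u1 n ≠ 0 := fun n => mul_ne_zero (pow_ne_zero _ hq0) hy0
  have hu2ne : ∀ n, u2 n ≠ 0 := fun n => mul_ne_zero (pow_ne_zero _ hq0) (inv_ne_zero hy0)
  have hv1 : ∀ n : ℕ, nval (u1 n) = ((n:ℝ) + 1 - (i:ℝ)) * Q := by
    intro n
    have : nval (u1 n) = nval (q ^ (n+1)) + nval y := my_nval_mul (pow_ne_zero _ hq0) hy0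
    rw [this, my_nval_pow, hnvy]; push_cast; ring
  have hv2 : ∀ n : ℕ, nval (u2 n) = ((n:ℝ) + (i:ℝ)) * Q := by
    intro n
    have : nval (u2 n) = nval (q ^ n) + nval y⁻¹ :=
      my_nval_mul (pow_ne_zero _ hq0) (inv_ne_zero hy0)
    rw [this, my_nval_pow, my_nval_inv, hnvy]; push_cast; ring
  -- tendsto facts
  have hqlt : ‖q‖ < 1 := my_norm_lt_one hq0 hQ
  have hpow : Tendsto (fun n : ℕ => q ^ n) atTop (nhds 0) :=
    tendsto_pow_atTop_nhds_zero_of_norm_lt_one hqlt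
  have ht1 : Tendsto u1 atTop (nhds 0) := by
    have h1 : Tendsto (fun n : ℕ => q ^ (n + 1)) atTop (nhds 0) :=
      hpow.comp (tendsto_add_atTop_nat 1)
    have := h1.mul_const y
    simpa using this
  have ht2 : Tendsto u2 atTop (nhds 0) := by
    have := hpow.mul_const y⁻¹
    simpa using this
  -- nonvanishing facts
  have hne1 : ∀ n : ℕ, 1 - u1 n ≠ 0 := by
    intro n h
    have h1 : q ^ (n+1) * y = 1 := by
      have := sub_eq_zero.1 h; exact this.symm
    apply hxa (-((n:ℤ)+1))
    have hqn : (q:K) ^ (n+1) ≠ 0 := pow_ne_zero _ hq0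
    have h2 : q ^ (n+1) * x = a := by
      rw [hydef] at h1; field_simp at h1; linear_combination h1
    have h3 : x = a * (q ^ (n+1))⁻¹ :=
      (eq_mul_inv_iff_mul_eq₀ hqn).2 (by rw [← h2]; ring)
    rw [h3]
    congr 1
    rw [show (-((n:ℤ)+1)) = -(((n+1:ℕ)):ℤ) by push_cast; ring, zpow_neg, zpow_natCast]
  have hne2 : ∀ n : ℕ, 1 - u2 n ≠ 0 := by
    intro n h
    have h1 : q ^ n * y⁻¹ = 1 := (sub_eq_zero.1 h).symm
    apply hxa (n:ℤ)
    have h2 : x = a * q ^ n := by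
      rw [hydef] at h1; field_simp at h1; linear_combination -h1
    rw [h2, zpow_natCast]
  have hne3 : 1 - y * q ^ (i:ℤ) ≠ 0 := by
    intro h
    have h1 : y * q ^ (i:ℤ) = 1 := (sub_eq_zero.1 h).symm
    apply hxa (-i)
    have hqi : (q:K) ^ (i:ℤ) ≠ 0 := zpow_ne_zero _ hq0
    have h2 : x * q ^ (i:ℤ) = a := by
      rw [hydef] at h1; field_simp at h1; linear_combination h1
    have h3 : x = a * (q ^ (i:ℤ))⁻¹ := (eq_mul_inv_iff_mul_eq₀ hqi).2 h2
    rw [h3, zpow_neg]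
  -- the candidate least value
  set t : ℝ := (((i:ℝ)) - (i:ℝ)^2) / 2 * Q with htdef
  have hleast : IsLeast
      (Set.range fun m : ℤ =>
        (((m : ℝ)^2 - (m : ℝ)) / 2) * nval q + (m : ℝ) * (nval a - nval x)) t := by
    constructor
    · refine ⟨-i, ?_⟩
      rw [hi]; push_cast; rw [htdef, hQdef]; ring
    · rintro r ⟨m, rfl⟩
      rw [hi]
      have hk := my_int_sq (m + i)
      push_cast at hk
      have := mul_nonneg hk hQ.le
      nlinarith [this]
  refine ⟨t, hleast, ?_⟩
  -- Theta decomposition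
  have hTheta : Theta q y = (∏' n, (1 - u1 n)) * ∏' n, (1 - u2 n) := rfl
  rcases le_or_gt 1 i with hige | hilt
  · -- case i ≥ 1
    obtain ⟨k, hk⟩ : ∃ k : ℕ, (k:ℤ) = i - 1 :=
      ⟨(i-1).toNat, Int.toNat_of_nonneg (by omega)⟩
    have hkreal : (k:ℝ) = (i:ℝ) - 1 := by exact_mod_cast congrArg (Int.cast : ℤ → ℝ) hk
    -- P2 has nval 0
    have hs2 : ∀ n : ℕ, n ∉ (∅ : Finset ℕ) → ‖u2 n‖ < 1 := by
      intro n _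
      refine my_norm_lt_one (hu2ne n) ?_
      rw [hv2]
      have : (1:ℝ) ≤ (n:ℝ) + (i:ℝ) := by
        have h1 : (1:ℝ) ≤ (i:ℝ) := by exact_mod_cast hige
        have h2 : (0:ℝ) ≤ (n:ℝ) := Nat.cast_nonneg n
        linarith
      nlinarith
    have hP2 : nval (∏' n, (1 - u2 n)) = 0 := by
      rw [my_nval_tprod u2 ht2 ∅ hs2 (fun n hn => absurd hn (Finset.notMem_empty n))]
      simp
    -- P1
    have hs1 : ∀ n : ℕ, n ∉ Finset.range (k+1) → ‖u1 n‖ < 1 := by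
      intro n hn
      have hnk : k + 1 ≤ n := by simpa using Finset.mem_range.not.1 hn
      refine my_norm_lt_one (hu1ne n) ?_
      rw [hv1]
      have h1 : ((k:ℝ)+1) ≤ (n:ℝ) := by exact_mod_cast hnk
      nlinarith [hkreal]
    have hP1 : nval (∏' n, (1 - u1 n)) = ∑ n ∈ Finset.range (k+1), nval (1 - u1 n) :=
      my_nval_tprod u1 ht1 _ hs1 (fun n _ => hne1 n)
    have hlast : nval (1 - u1 k) = nval (1 - y * q ^ (i:ℤ)) := by
      have h2 : u1 k = y * q ^ (i:ℤ) := by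
        show q ^ (k+1) * y = y * q ^ (i:ℤ)
        have h3 : ((k+1:ℕ):ℤ) = i := by omega
        rw [← zpow_natCast q (k+1), h3, mul_comm]
      rw [h2]
    have hterm : ∀ n ∈ Finset.range k, nval (1 - u1 n) = ((n:ℝ) + 1 - (i:ℝ)) * Q := by
      intro n hn
      have hnk : n < k := Finset.mem_range.1 hn
      have hneg : nval (u1 n) < 0 := by
        rw [hv1]
        have h1 : (n:ℝ) ≤ (k:ℝ) - 1 := by
          have : (n:ℝ) + 1 ≤ (k:ℝ) := by exact_mod_cast hnk
          linarith
        nlinarith [hkreal]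
      rw [my_nval_one_sub_of_neg (hu1ne n) hneg, hv1]
    have hsumval : ∑ n ∈ Finset.range k, ((n:ℝ) + 1 - (i:ℝ)) * Q = t := by
      have h1 : ∀ n ∈ Finset.range k, ((n:ℝ)+1-(i:ℝ))*Q = (n:ℝ)*Q + (1-(i:ℝ))*Q :=
        fun n _ => by ring
      rw [Finset.sum_congr rfl h1, Finset.sum_add_distrib, ← Finset.sum_mul, my_sum_range_cast,
        Finset.sum_const, Finset.card_range, nsmul_eq_mul, htdef, hkreal]
      ring
    have hsum : ∑ n ∈ Finset.range (k+1), nval (1 - u1 n) = t + nval (1 - y * q ^ (i:ℤ)) := by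
      rw [Finset.sum_range_succ, hlast, Finset.sum_congr rfl hterm, hsumval]
    have hP1pos := my_tprod_pos u1 ht1 _ hs1 (fun n _ => hne1 n)
    have hP2pos := my_tprod_pos u2 ht2 ∅ hs2 (fun n hn => absurd hn (Finset.notMem_empty n))
    calc nval (Theta q y)
        = nval (∏' n, (1 - u1 n)) + nval (∏' n, (1 - u2 n)) := by
          rw [hTheta]
          exact my_nval_mul (norm_pos_iff.1 hP1pos) (norm_pos_iff.1 hP2pos)
      _ = t + nval (1 - y * q ^ (i:ℤ)) := by rw [hP1, hP2, hsum]; ring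
  · -- case i ≤ 0
    have hile : i ≤ 0 := by omega
    obtain ⟨j, hj⟩ : ∃ j : ℕ, (j:ℤ) = -i :=
      ⟨(-i).toNat, Int.toNat_of_nonneg (by omega)⟩
    have hjreal : (j:ℝ) = -(i:ℝ) := by exact_mod_cast congrArg (Int.cast : ℤ → ℝ) hj
    have hs1 : ∀ n : ℕ, n ∉ (∅:Finset ℕ) → ‖u1 n‖ < 1 := by
      intro n _
      refine my_norm_lt_one (hu1ne n) ?_
      rw [hv1]
      have h1 : (i:ℝ) ≤ 0 := by exact_mod_cast hile
      have h2 : (0:ℝ) ≤ (n:ℝ) := Nat.cast_nonneg n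
      nlinarith
    have hP1 : nval (∏' n, (1 - u1 n)) = 0 := by
      rw [my_nval_tprod u1 ht1 ∅ hs1 (fun n hn => absurd hn (Finset.notMem_empty n))]
      simp
    have hs2 : ∀ n : ℕ, n ∉ Finset.range (j+1) → ‖u2 n‖ < 1 := by
      intro n hn
      have hnj : j + 1 ≤ n := by simpa using Finset.mem_range.not.1 hn
      refine my_norm_lt_one (hu2ne n) ?_
      rw [hv2]
      have h1 : ((j:ℝ)+1) ≤ (n:ℝ) := by exact_mod_cast hnj
      nlinarith [hjreal]
    have hP2 : nval (∏' n, (1 - u2 n)) = ∑ n ∈ Finset.range (j+1), nval (1 - u2 n) :=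
      my_nval_tprod u2 ht2 _ hs2 (fun n _ => hne2 n)
    have hlast : nval (1 - u2 j) = nval (1 - y * q ^ (i:ℤ)) := by
      have hqji : (q:K)^j * q^(i:ℤ) = 1 := by
        rw [← zpow_natCast q j, ← zpow_add₀ hq0, hj]; simp
      have hfact : 1 - u2 j = (-(q^j : K) * y⁻¹) * (1 - y * q^(i:ℤ)) := by
        have h1 : y⁻¹ * y = 1 := inv_mul_cancel₀ hy0
        have hr : (-(q^j : K) * y⁻¹) * (1 - y * q^(i:ℤ))
            = -(q^j * y⁻¹) + (q^j * q^(i:ℤ)) * (y⁻¹ * y) := by ring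
        show (1:K) - q^j * y⁻¹ = _
        rw [hr, h1, hqji]; ring
      have hunit : (-(q^j : K) * y⁻¹) ≠ 0 :=
        mul_ne_zero (neg_ne_zero.2 (pow_ne_zero _ hq0)) (inv_ne_zero hy0)
      have hunitval : nval (-(q^j : K) * y⁻¹) = 0 := by
        rw [my_nval_mul (neg_ne_zero.2 (pow_ne_zero _ hq0)) (inv_ne_zero hy0),
          my_nval_neg, my_nval_pow, my_nval_inv, hnvy, hjreal]
        ring
      rw [hfact, my_nval_mul hunit hne3, hunitval, zero_add]
    have hterm : ∀ n ∈ Finset.range j, nval (1 - u2 n) = ((n:ℝ) + (i:ℝ)) * Q := by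
      intro n hn
      have hnj : n < j := Finset.mem_range.1 hn
      have hneg : nval (u2 n) < 0 := by
        rw [hv2]
        have h1 : (n:ℝ) + 1 ≤ (j:ℝ) := by exact_mod_cast hnj
        nlinarith [hjreal]
      rw [my_nval_one_sub_of_neg (hu2ne n) hneg, hv2]
    have hsumval : ∑ n ∈ Finset.range j, ((n:ℝ) + (i:ℝ)) * Q = t := by
      have h1 : ∀ n ∈ Finset.range j, ((n:ℝ)+(i:ℝ))*Q = (n:ℝ)*Q + (i:ℝ)*Q :=
        fun n _ => by ring
      rw [Finset.sum_congr rfl h1, Finset.sum_add_distrib, ← Finset.sum_mul, my_sum_range_cast,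
        Finset.sum_const, Finset.card_range, nsmul_eq_mul, htdef, hjreal]
      ring
    have hsum : ∑ n ∈ Finset.range (j+1), nval (1 - u2 n) = t + nval (1 - y * q ^ (i:ℤ)) := by
      rw [Finset.sum_range_succ, hlast, Finset.sum_congr rfl hterm, hsumval]
    have hP1pos := my_tprod_pos u1 ht1 ∅ hs1 (fun n hn => absurd hn (Finset.notMem_empty n))
    have hP2pos := my_tprod_pos u2 ht2 _ hs2 (fun n _ => hne2 n)
    calc nval (Theta q y)
        = nval (∏' n, (1 - u1 n)) + nval (∏' n, (1 - u2 n)) := by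
          rw [hTheta]
          exact my_nval_mul (norm_pos_iff.1 hP1pos) (norm_pos_iff.1 hP2pos)
      _ = t + nval (1 - y * q ^ (i:ℤ)) := by rw [hP1, hP2, hsum]; ring
end
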